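/- arXiv:1301.4085 — 8 statements merged into one kernel-verified Lean document; each statement's English description precedes it below -/
import Mathlib

section
/- Let B = (B^0,...,B^{l-1}) be a shifted symbol: each row B^c is a strictly increasing finite sequence of integers, the c-th row having h + s_c entries (i.e. rows come from partitions as β-sequences shifted by s_c). Form B' by sorting each column of B so that entries weakly decrease from top to bottom (where the i-th column from the right consists of the entries B^c at position i + s_c - s_{l-1} for those c with i + s_c - s_{l-1} > 0). Then every row of B' is again strictly increasing; that is, B' is again a well-defined shifted symbol, and it is standard. -/
open scoped Classical

namespace AK

/-- A partition, given by its parts indexed from 1 (index 0 unused and set to 0),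
finitely supported and weakly decreasing on positive indices. -/
def IsPartitionF (p : ℕ →₀ ℕ) : Prop :=
  p 0 = 0 ∧ ∀ i j : ℕ, 1 ≤ i → i ≤ j → p j ≤ p i

/-- An `l`-multipartition: rows `0,…,l-1` are partitions, rows `≥ l` are zero. -/
def IsMultipartition (l : ℕ) (lam : ℕ → ℕ →₀ ℕ) : Prop :=
  (∀ c, IsPartitionF (lam c)) ∧ ∀ c, l ≤ c → lam c = 0

/-- A multicharge: `s` is weakly increasing on `{0,…,l-1}`. -/
def IsMulticharge (l : ℕ) (s : ℕ → ℤ) : Prop :=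
  ∀ c c' : ℕ, c ≤ c' → c' < l → s c ≤ s c'

/-- The rank of an `l`-multipartition. -/
def rank (l : ℕ) (lam : ℕ → ℕ →₀ ℕ) : ℕ :=
  ∑ c ∈ Finset.range l, (lam c).sum fun _ v => v

/-- The entry of the shifted `s`-symbol of size `h` in row `c` at position `i`
(counted from the right): `λ^c_i - i + s_c + h`. -/
def symbEntry (s : ℕ → ℤ) (h : ℕ) (lam : ℕ → ℕ →₀ ℕ) (c i : ℕ) : ℤ :=
  ((lam c) i : ℤ) - (i : ℤ) + s c + (h : ℤ)

/-- `λ` is cylindric for the multicharge `s`: `λ^c_i ≥ λ^{c+1}_{i+s_{c+1}-s_c}`. -/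
def Cylindric (l : ℕ) (s : ℕ → ℤ) (lam : ℕ → ℕ →₀ ℕ) : Prop :=
  ∀ c : ℕ, c + 1 < l → ∀ i : ℕ, 1 ≤ i →
    (lam (c+1)) (i + (s (c+1) - s c).toNat) ≤ (lam c) i

/-- The shifted symbol is standard: columns weakly decrease from top to bottom, i.e.
`B^c_i ≥ B^{c+1}_{i+s_{c+1}-s_c}`. -/
def Standard (l : ℕ) (s : ℕ → ℤ) (h : ℕ) (lam : ℕ → ℕ →₀ ℕ) : Prop :=
  ∀ c : ℕ, c + 1 < l → ∀ i : ℕ, 1 ≤ i →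
    symbEntry s h lam (c+1) (i + (s (c+1) - s c).toNat) ≤ symbEntry s h lam c i

/-- The multiset of entries of the column of the symbol with column coordinate `j`
(row `c` meets this column at position `j + s_c`, when `j + s_c ≥ 1`). -/
def columnMultiset (l : ℕ) (s : ℕ → ℤ) (h : ℕ) (lam : ℕ → ℕ →₀ ℕ) (j : ℤ) : Multiset ℤ :=
  (((Finset.range l).filter (fun c => 1 ≤ j + s c)).val).map
    (fun c => symbEntry s h lam c (j + s c).toNat)

/-- `μ` is the regularization `λ^R` of `λ`: a multipartition whose symbol is standard and
whose columns carry the same multisets of entries as those of the symbol of `λ`. -/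
def IsRegularization (l : ℕ) (s : ℕ → ℤ) (lam mu : ℕ → ℕ →₀ ℕ) : Prop :=
  IsMultipartition l mu ∧ (∀ h : ℕ, Standard l s h mu) ∧
  ∀ (h : ℕ) (j : ℤ), columnMultiset l s h mu j = columnMultiset l s h lam j

/-- The dominance order: `lam ⊵ mu`. -/
def Dominates (l : ℕ) (lam mu : ℕ → ℕ →₀ ℕ) : Prop :=
  ∀ c : ℕ, c < l → ∀ k : ℕ,
    ((∑ i ∈ Finset.range c, (mu i).sum fun _ v => v) + ∑ j ∈ Finset.range k, (mu c) (j+1))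
      ≤ ((∑ i ∈ Finset.range c, (lam i).sum fun _ v => v) + ∑ j ∈ Finset.range k, (lam c) (j+1))

/-- The value `x` occurs in row `c` of the shifted symbol of size `h`. -/
def InRow (s : ℕ → ℤ) (h : ℕ) (lam : ℕ → ℕ →₀ ℕ) (c : ℕ) (x : ℤ) : Prop :=
  ∃ p : ℕ, 1 ≤ p ∧ (p : ℤ) ≤ (h : ℤ) + s c ∧ symbEntry s h lam c p = x

/-- `R(λ)_{(j,c)}`: the number of rows `c' > c` with `B^c_j < B^{c'}_{j+s_{c'}-s_c}` and
`B^c_j` not occurring in row `c'`. -/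
noncomputable def RstatAt (l : ℕ) (s : ℕ → ℤ) (h : ℕ) (lam : ℕ → ℕ →₀ ℕ) (c j : ℕ) : ℕ :=
  ((Finset.range l).filter (fun c' => c < c' ∧
      symbEntry s h lam c j < symbEntry s h lam c' (j + (s c' - s c).toNat) ∧
      ¬ InRow s h lam c' (symbEntry s h lam c j))).card

/-- The regularization statistic `R(λ)`. -/
noncomputable def Rstat (l : ℕ) (s : ℕ → ℤ) (h : ℕ) (lam : ℕ → ℕ →₀ ℕ) : ℕ :=
  ∑ c ∈ Finset.range l, ∑ j ∈ Finset.Icc 1 (((h : ℤ) + s c).toNat), RstatAt l s h lam c j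

/-- `h` is an admissible size for the symbol of `λ`: every row is nonempty and long enough
to contain all nonzero parts. -/
def Admissible (l : ℕ) (s : ℕ → ℤ) (h : ℕ) (lam : ℕ → ℕ →₀ ℕ) : Prop :=
  ∀ c : ℕ, c < l → 1 ≤ (h : ℤ) + s c ∧ (lam c) (((h : ℤ) + s c).toNat) = 0

/-- `mu = lam⁻` is obtained from the nonempty cylindric `lam` by the reduction step:
`c0` is the least index of a nonempty component, `i0` the minimal position of a gap,
and the `r0` equal column entries `j(λ)` are decreased by `1`. -/
def IsReduction (l : ℕ) (s : ℕ → ℤ) (lam mu : ℕ → ℕ →₀ ℕ) : Prop :=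
  ∃ c0 i0 r0 : ℕ, c0 < l ∧ (lam c0) 1 ≠ 0 ∧ (∀ c, c < c0 → (lam c) 1 = 0) ∧
    1 ≤ i0 ∧ (lam c0) (i0+1) < (lam c0) i0 ∧
    (∀ i, 1 ≤ i → i < i0 → (lam c0) (i+1) = (lam c0) i) ∧
    1 ≤ r0 ∧ c0 + r0 ≤ l ∧
    (∀ k, k < r0 → (lam (c0+k)) (i0 + (s (c0+k) - s c0).toNat) = (lam c0) i0) ∧
    (c0 + r0 = l ∨ (lam (c0+r0)) (i0 + (s (c0+r0) - s c0).toNat) ≠ (lam c0) i0) ∧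
    (∀ c i, (mu c) i =
      if c0 ≤ c ∧ c < c0 + r0 ∧ i = i0 + (s c - s c0).toNat then (lam c) i - 1 else (lam c) i)

/-- Row `c` of the symbol of `xi` is obtained from that of `nu` by replacing the
entry `j+h-1` with `j+h`. -/
def ArrowRow (s : ℕ → ℤ) (h : ℕ) (j : ℤ) (nu xi : ℕ → ℕ →₀ ℕ) (c : ℕ) : Prop :=
  ∃ p : ℕ, 1 ≤ p ∧ (p : ℤ) ≤ (h : ℤ) + s c ∧
    symbEntry s h nu c p = j + h - 1 ∧ symbEntry s h xi c p = j + h ∧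
    ∀ i, 1 ≤ i → i ≠ p → symbEntry s h xi c i = symbEntry s h nu c i

/-- `nu →^{j:k} xi` along the set `rows` of `k` distinct rows. -/
def Arrow (l : ℕ) (s : ℕ → ℤ) (h : ℕ) (j : ℤ) (rows : Finset ℕ)
    (nu xi : ℕ → ℕ →₀ ℕ) : Prop :=
  (∀ c ∈ rows, c < l) ∧ (∀ c ∈ rows, ArrowRow s h j nu xi c) ∧
  ∀ c, c ∉ rows → ∀ i, 1 ≤ i → symbEntry s h xi c i = symbEntry s h nu c i

/-- Number of entries of row `c` of the symbol equal to `x`. -/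
noncomputable def countVal (s : ℕ → ℤ) (h : ℕ) (lam : ℕ → ℕ →₀ ℕ) (c : ℕ) (x : ℤ) : ℕ :=
  ((Finset.Icc 1 (((h : ℤ) + s c).toNat)).filter (fun i => symbEntry s h lam c i = x)).card

/-- The exponent `N_j(ν,ξ)` in the Fock space action of `f_j^{(k)}`. -/
noncomputable def Nstat (s : ℕ → ℤ) (h : ℕ) (j : ℤ) (rows : Finset ℕ)
    (nu xi : ℕ → ℕ →₀ ℕ) : ℤ :=
  ∑ t ∈ rows,
    ((∑ c ∈ Finset.range (t+1), (countVal s h xi c (j + h - 1) : ℤ))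
      - ∑ c ∈ Finset.range (t+1), (countVal s h nu c (j + h) : ℤ))

/-- sorting the columns of a shifted symbol into weakly decreasing order yields
again a well-defined (rows strictly increasing) shifted symbol, and it is standard. -/
theorem column_sorted_symbol_well_defined (l : ℕ) (s : ℕ → ℤ) (h : ℕ)
    (hs : IsMulticharge l s) (B B' : ℕ → ℕ → ℤ)
    (hrow : ∀ c, c < l → ∀ i : ℕ, 1 ≤ i → (i : ℤ) + 1 ≤ (h : ℤ) + s c → B c (i+1) < B c i)
    (hperm : ∀ j : ℤ, j ≤ (h : ℤ) →
      (((Finset.range l).filter (fun c => 1 ≤ j + s c)).val).map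
          (fun c => B' c (j + s c).toNat)
        = (((Finset.range l).filter (fun c => 1 ≤ j + s c)).val).map
          (fun c => B c (j + s c).toNat))
    (hsorted : ∀ j : ℤ, j ≤ (h : ℤ) → ∀ c : ℕ, c + 1 < l → 1 ≤ j + s c →
      B' (c+1) (j + s (c+1)).toNat ≤ B' c (j + s c).toNat) :
    (∀ c, c < l → ∀ i : ℕ, 1 ≤ i → (i : ℤ) + 1 ≤ (h : ℤ) + s c → B' c (i+1) < B' c i) ∧
    (∀ j : ℤ, j ≤ (h : ℤ) → ∀ c : ℕ, c + 1 < l → 1 ≤ j + s c →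
      B' (c+1) (j + s (c+1)).toNat ≤ B' c (j + s c).toNat) := by
  classical
  refine ⟨?_, hsorted⟩
  -- monotonicity of B' along columns
  have mono : ∀ j : ℤ, j ≤ (h:ℤ) → ∀ c₁ c₂ : ℕ, c₁ ≤ c₂ → c₂ < l → 1 ≤ j + s c₁ →
      B' c₂ (j + s c₂).toNat ≤ B' c₁ (j + s c₁).toNat := by
    intro j hjh c₁ c₂ hle
    induction hle with
    | refl => intro _ _; exact le_rfl
    | @step n h' ih =>
      intro hlt h1
      have hnl : n < l := Nat.lt_of_succ_lt hlt
      have hsn : 1 ≤ j + s n := by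
        have := hs c₁ n h' hnl
        linarith
      exact le_trans (hsorted j hjh n hlt hsn) (ih hnl h1)
  intro c hc i hi hih
  set j : ℤ := (i : ℤ) - s c with hjdef
  have hji : j + s c = (i : ℤ) := by simp [hjdef]
  have h1c : 1 ≤ j + s c := by rw [hji]; exact_mod_cast hi
  have hj1h : j + 1 ≤ (h:ℤ) := by omega
  have hjh : j ≤ (h:ℤ) := by omega
  have htoc : (j + s c).toNat = i := by omega
  have htoc1 : (j + 1 + s c).toNat = i + 1 := by omega
  set S : Finset ℕ := (Finset.range l).filter (fun c' => 1 ≤ j + s c') with hS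
  set T : Finset ℕ := (Finset.range l).filter (fun c' => 1 ≤ j + 1 + s c') with hT
  set x : ℤ := B' c (i+1) with hx
  have hcS : c ∈ S := by
    rw [hS, Finset.mem_filter, Finset.mem_range]; exact ⟨hc, h1c⟩
  have hST : S ⊆ T := by
    intro c' hc'
    rw [hS, Finset.mem_filter] at hc'
    rw [hT, Finset.mem_filter]
    exact ⟨hc'.1, by linarith [hc'.2]⟩
  have hTl : ∀ c' ∈ T, c' < l := by
    intro c' hc'
    rw [hT, Finset.mem_filter, Finset.mem_range] at hc'
    exact hc'.1
  -- elements of T \ S are < c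
  have hD : ∀ c' ∈ T, c' ∉ S → c' < c := by
    intro c' hc'T hc'S
    by_contra hcon
    push_neg at hcon
    apply hc'S
    rw [hS, Finset.mem_filter, Finset.mem_range]
    refine ⟨hTl c' hc'T, ?_⟩
    have := hs c c' hcon (hTl c' hc'T)
    linarith
  -- the count bookkeeping
  set k₁ := (S.filter (· ≤ c)).card with hk₁
  set k₂ := (T.filter (· ≤ c)).card with hk₂
  set d := (T \ S).card with hd
  -- (a) k₂ = k₁ + d
  have ha : k₂ = k₁ + d := by
    have hunion : T.filter (· ≤ c) = S.filter (· ≤ c) ∪ (T \ S) := by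
      ext c'
      simp only [Finset.mem_union, Finset.mem_filter, Finset.mem_sdiff]
      constructor
      · rintro ⟨h1, h2⟩
        by_cases hcs : c' ∈ S
        · exact Or.inl ⟨hcs, h2⟩
        · exact Or.inr ⟨h1, hcs⟩
      · rintro (⟨h1, h2⟩ | ⟨h1, h2⟩)
        · exact ⟨hST h1, h2⟩
        · exact ⟨h1, le_of_lt (hD c' h1 h2)⟩
    have hdisj : Disjoint (S.filter (· ≤ c)) (T \ S) := by
      rw [Finset.disjoint_left]
      intro a haf haD
      rw [Finset.mem_sdiff] at haD
      exact haD.2 (Finset.mem_of_mem_filter a haf)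
    rw [hk₂, hunion, Finset.card_union_of_disjoint hdisj]
  -- Step A: rows ≤ c of T have B' column-(j+1) entry ≥ x
  have hA : T.filter (· ≤ c) ⊆ T.filter (fun c' => x ≤ B' c' (j + 1 + s c').toNat) := by
    intro c' hc'
    rw [Finset.mem_filter] at hc' ⊢
    refine ⟨hc'.1, ?_⟩
    have h1c' : 1 ≤ j + 1 + s c' := by
      have := (Finset.mem_filter.mp hc'.1).2
      exact this
    have := mono (j+1) hj1h c' c hc'.2 hc h1c'
    rw [htoc1] at this
    exact this
  -- Step B: transfer the count to B via hperm (j+1)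
  have hB : (T.filter (fun c' => x ≤ B' c' (j + 1 + s c').toNat)).card
      = (T.filter (fun c' => x ≤ B c' (j + 1 + s c').toNat)).card := by
    have hp := hperm (j+1) hj1h
    have h1 : Multiset.countP (fun y => x ≤ y)
          (Multiset.map (fun c' => B' c' (j + 1 + s c').toNat) T.val)
        = Multiset.countP (fun y => x ≤ y)
          (Multiset.map (fun c' => B c' (j + 1 + s c').toNat) T.val) := by
      rw [hT]; exact congrArg _ hp
    rw [Multiset.countP_map, Multiset.countP_map] at h1
    rw [Finset.card_def, Finset.card_def, Finset.filter_val, Finset.filter_val]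
    exact h1
  -- Step D: rows of F ∩ S give column-j entries of B greater than x
  have hd' : ∀ c' ∈ (T.filter (fun c' => x ≤ B c' (j + 1 + s c').toNat)) ∩ S,
      c' ∈ S.filter (fun c' => x < B c' (j + s c').toNat) := by
    intro c' hc'
    rw [Finset.mem_inter, Finset.mem_filter] at hc'
    obtain ⟨⟨hc'T, hxle⟩, hc'S⟩ := hc'
    rw [Finset.mem_filter]
    refine ⟨hc'S, ?_⟩
    have h1c' : 1 ≤ j + s c' := (Finset.mem_filter.mp hc'S).2
    have hcl' : c' < l := hTl c' hc'T
    have hpos1 : 1 ≤ (j + s c').toNat := by omega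
    have hbd : ((j + s c').toNat : ℤ) + 1 ≤ (h:ℤ) + s c' := by
      omega
    have hstep := hrow c' hcl' (j + s c').toNat hpos1 hbd
    have heq : (j + 1 + s c').toNat = (j + s c').toNat + 1 := by omega
    rw [heq] at hxle
    linarith
  -- Step E: transfer the column-j count from B to B'
  have hE : (S.filter (fun c' => x < B c' (j + s c').toNat)).card
      = (S.filter (fun c' => x < B' c' (j + s c').toNat)).card := by
    have hp := hperm j hjh
    have h1 : Multiset.countP (fun y => x < y)
          (Multiset.map (fun c' => B c' (j + s c').toNat) S.val)
        = Multiset.countP (fun y => x < y)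
          (Multiset.map (fun c' => B' c' (j + s c').toNat) S.val) := by
      rw [hS]; exact (congrArg _ hp).symm
    rw [Multiset.countP_map, Multiset.countP_map] at h1
    rw [Finset.card_def, Finset.card_def, Finset.filter_val, Finset.filter_val]
    exact h1
  -- suppose for contradiction the row inequality fails
  by_contra hcon
  push_neg at hcon
  -- then all rows of G' are < c
  have hF : S.filter (fun c' => x < B' c' (j + s c').toNat) ⊆ S.filter (· < c) := by
    intro c' hc'
    rw [Finset.mem_filter] at hc' ⊢
    refine ⟨hc'.1, ?_⟩
    by_contra hge
    push_neg at hge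
    have hc'l : c' < l := by
      have := (Finset.mem_filter.mp hc'.1).1
      exact Finset.mem_range.mp this
    have := mono j hjh c c' hge hc'l h1c
    rw [htoc] at this
    have : B' c' (j + s c').toNat ≤ x := le_trans this hcon
    linarith [hc'.2]
  -- cardinality bookkeeping
  have hg : (S.filter (· < c)).card + 1 = k₁ := by
    have hins : S.filter (· ≤ c) = insert c (S.filter (· < c)) := by
      ext c'
      simp only [Finset.mem_insert, Finset.mem_filter]
      constructor
      · rintro ⟨h1, h2⟩
        rcases lt_or_eq_of_le h2 with h3 | h3
        · exact Or.inr ⟨h1, h3⟩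
        · exact Or.inl h3
      · rintro (h1 | ⟨h1, h2⟩)
        · exact ⟨h1 ▸ hcS, le_of_eq h1⟩
        · exact ⟨h1, le_of_lt h2⟩
    have hnotmem : c ∉ S.filter (· < c) := by
      simp only [Finset.mem_filter]
      rintro ⟨_, h2⟩
      exact lt_irrefl c h2
    rw [hk₁, hins, Finset.card_insert_of_notMem hnotmem]
  -- combine
  set F := T.filter (fun c' => x ≤ B c' (j + 1 + s c').toNat) with hFdef
  have hFT : F ⊆ T := Finset.filter_subset _ _
  have hcard1 : (F ∩ S).card + (F \ S).card = F.card := Finset.card_inter_add_card_sdiff F S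
  have hcard2 : (F \ S).card ≤ d := by
    apply Finset.card_le_card
    exact Finset.sdiff_subset_sdiff hFT (le_refl S)
  have hcard3 : k₂ ≤ F.card := by
    calc k₂ ≤ (T.filter (fun c' => x ≤ B' c' (j + 1 + s c').toNat)).card :=
          Finset.card_le_card hA
    _ = F.card := hB
  have hcard4 : (F ∩ S).card ≤ (S.filter (fun c' => x < B c' (j + s c').toNat)).card := by
    apply Finset.card_le_card
    intro c' hc'
    exact hd' c' hc'
  have hcard5 : (S.filter (fun c' => x < B' c' (j + s c').toNat)).card ≤ (S.filter (· < c)).card :=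
    Finset.card_le_card hF
  omega

end AK
end

section
/- Suppose B = (B^0,...,B^{l-1}) is an array where each column has been sorted to be weakly decreasing from top to bottom, starting from an array whose rows were strictly increasing. Assume for contradiction that some row c has two adjacent entries with B^c_{j+1} ≥ B^c_j (entries indexed decreasingly from left). Let A_1 be the multiset of entries in the column of B^c_j that are ≤ B^c_j in the original array, and A_2 the multiset of entries in the column of B^c_{j+1} that are ≥ B^c_j in the original array, with the column of B^c_{j+1} having m entries. Then |A_1| ≥ l - c, |A_2| ≥ m - l + c + 1, and the rows containing elements of A_1 (in the first column) and the rows containing elements of A_2 (in the second column) are disjoint, giving |A_1| + |A_2| ≤ m, a contradiction; hence each row of the column-sorted array is strictly increasing. -/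
open scoped Classical

namespace AK

/-- each row of the column-sorted array is strictly increasing. -/
theorem column_sorted_rows_strictly_increasing (l : ℕ) (s : ℕ → ℤ) (h : ℕ)
    (hs : IsMulticharge l s) (B B' : ℕ → ℕ → ℤ)
    (hrow : ∀ c, c < l → ∀ i : ℕ, 1 ≤ i → (i : ℤ) + 1 ≤ (h : ℤ) + s c → B c (i+1) < B c i)
    (hperm : ∀ j : ℤ, j ≤ (h : ℤ) →
      (((Finset.range l).filter (fun c => 1 ≤ j + s c)).val).map
          (fun c => B' c (j + s c).toNat)
        = (((Finset.range l).filter (fun c => 1 ≤ j + s c)).val).map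
          (fun c => B c (j + s c).toNat))
    (hsorted : ∀ j : ℤ, j ≤ (h : ℤ) → ∀ c : ℕ, c + 1 < l → 1 ≤ j + s c →
      B' (c+1) (j + s (c+1)).toNat ≤ B' c (j + s c).toNat) :
    ∀ c, c < l → ∀ i : ℕ, 1 ≤ i → (i : ℤ) + 1 ≤ (h : ℤ) + s c → B' c (i+1) < B' c i := by
  intro c hc i hi hih
  by_contra hcon
  push_neg at hcon
  -- hcon : B' c i ≤ B' c (i+1)
  set v := B' c i with hv
  set F : ℤ → Finset ℕ := fun j => (Finset.range l).filter (fun c' => 1 ≤ j + s c') with hF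
  set j1 : ℤ := (i : ℤ) - s c with hj1def
  set j2 : ℤ := (i : ℤ) + 1 - s c with hj2def
  have hj1c : j1 + s c = (i : ℤ) := by ring
  have hj2c : j2 + s c = (i : ℤ) + 1 := by ring
  have hj1h : j1 ≤ (h : ℤ) := by omega
  have hj2h : j2 ≤ (h : ℤ) := by omega
  have hj1pos : 1 ≤ j1 + s c := by omega
  have hj2pos : 1 ≤ j2 + s c := by omega
  -- column monotonicity of B'
  have col_mono : ∀ j : ℤ, j ≤ (h : ℤ) → ∀ a : ℕ, 1 ≤ j + s a → ∀ b : ℕ, a ≤ b → b < l →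
      B' b (j + s b).toNat ≤ B' a (j + s a).toNat := by
    intro j hj a hja b hab
    induction b, hab using Nat.le_induction with
    | base => intro _; exact le_refl _
    | succ b hb ih =>
      intro hbl
      have hbl' : b < l := Nat.lt_of_succ_lt hbl
      have h1 : 1 ≤ j + s b := le_trans hja (by linarith [hs a b hb hbl'])
      exact le_trans (hsorted j hj b hbl h1) (ih hbl')
  -- transfer counts from B' to B
  have count_eq : ∀ (j : ℤ) (p : ℤ → Prop), j ≤ (h : ℤ) →
      ((F j).filter (fun c' => p (B c' (j + s c').toNat))).card
        = ((F j).filter (fun c' => p (B' c' (j + s c').toNat))).card := by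
    intro j p hj
    have h1 := congrArg (Multiset.countP p) (hperm j hj)
    rw [Multiset.countP_map, Multiset.countP_map] at h1
    rw [Finset.card_filter, Finset.card_filter]
    simp only [Finset.sum_boole]
    rw [hF]
    exact_mod_cast h1.symm
  set S1 : Finset ℕ := (F j1).filter (fun c' => B c' (j1 + s c').toNat ≤ v) with hS1
  set S2 : Finset ℕ := (F j2).filter (fun c' => v ≤ B c' (j2 + s c').toNat) with hS2
  set S1' : Finset ℕ := (F j1).filter (fun c' => B' c' (j1 + s c').toNat ≤ v) with hS1'
  set S2' : Finset ℕ := (F j2).filter (fun c' => v ≤ B' c' (j2 + s c').toNat) with hS2'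
  have hc1 : S1.card = S1'.card := by
    rw [hS1, hS1']; convert count_eq j1 (fun x => x ≤ v) hj1h using 3
  have hc2 : S2.card = S2'.card := by
    rw [hS2, hS2']; convert count_eq j2 (fun x => v ≤ x) hj2h using 3
  -- lower bound for S1'
  have hsub1 : Finset.Ico c l ⊆ S1' := by
    intro c' hc'
    rw [Finset.mem_Ico] at hc'
    have hsc : s c ≤ s c' := hs c c' hc'.1 hc'.2
    have hmem : c' ∈ F j1 := by
      rw [hF]; simp only [Finset.mem_filter, Finset.mem_range]
      exact ⟨hc'.2, by omega⟩
    rw [hS1', Finset.mem_filter]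
    refine ⟨hmem, ?_⟩
    have := col_mono j1 hj1h c hj1pos c' hc'.1 hc'.2
    rw [hj1c] at this
    simpa [hv] using this
  have hlb1 : l - c ≤ S1'.card := by
    have := Finset.card_le_card hsub1
    simpa [Nat.card_Ico] using this
  -- lower bound for S2'
  have hsub2 : (F j2).filter (fun c' => c' ≤ c) ⊆ S2' := by
    intro c' hc'
    rw [Finset.mem_filter] at hc'
    obtain ⟨hmem, hle⟩ := hc'
    have hj2c' : 1 ≤ j2 + s c' := by
      rw [hF] at hmem; simp only [Finset.mem_filter, Finset.mem_range] at hmem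
      exact hmem.2
    rw [hS2', Finset.mem_filter]
    refine ⟨hmem, ?_⟩
    have := col_mono j2 hj2h c' hj2c' c hle hc
    rw [hj2c] at this
    have hi1 : ((i : ℤ) + 1).toNat = i + 1 := by omega
    rw [hi1] at this
    exact le_trans hcon this
  -- the part of column j2 strictly above row c
  have hhigh : (F j2).filter (fun c' => ¬ c' ≤ c) = Finset.Ico (c+1) l := by
    apply Finset.ext
    intro c'
    simp only [Finset.mem_filter, Finset.mem_Ico, hF, Finset.mem_range, not_le]
    constructor
    · rintro ⟨⟨h1, _⟩, h3⟩; omega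
    · rintro ⟨h1, h2⟩
      have hsc : s c ≤ s c' := hs c c' (by omega) h2
      exact ⟨⟨h2, by omega⟩, by omega⟩
  have hsplitcard : ((F j2).filter (fun c' => c' ≤ c)).card + (l - (c+1)) = (F j2).card := by
    have := Finset.card_filter_add_card_filter_not (s := F j2)
      (p := fun c' => c' ≤ c)
    rw [hhigh, Nat.card_Ico] at this
    exact this
  have hlb2 : ((F j2).filter (fun c' => c' ≤ c)).card ≤ S2'.card :=
    Finset.card_le_card hsub2
  -- S1 and S2 are disjoint
  have hdisj : Disjoint S1 S2 := by
    rw [Finset.disjoint_left]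
    intro c' h1 h2
    rw [hS1, Finset.mem_filter] at h1
    rw [hS2, Finset.mem_filter] at h2
    obtain ⟨hm1, hb1⟩ := h1
    obtain ⟨hm2, hb2⟩ := h2
    rw [hF] at hm1
    simp only [Finset.mem_filter, Finset.mem_range] at hm1
    obtain ⟨hc'l, hpos1⟩ := hm1
    set p : ℕ := (j1 + s c').toNat with hp
    have hp1 : 1 ≤ p := by omega
    have hpz : (p : ℤ) = j1 + s c' := by omega
    have hp2 : (j2 + s c').toNat = p + 1 := by omega
    have hple : (p : ℤ) + 1 ≤ (h : ℤ) + s c' := by omega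
    have := hrow c' hc'l p hp1 hple
    rw [hp2] at hb2
    linarith
  -- S1 ⊆ F j2
  have hsub12 : S1 ∪ S2 ⊆ F j2 := by
    apply Finset.union_subset
    · intro c' hc'
      rw [hS1, Finset.mem_filter] at hc'
      have hm := hc'.1
      rw [hF] at hm ⊢
      simp only [Finset.mem_filter, Finset.mem_range] at hm ⊢
      exact ⟨hm.1, by omega⟩
    · intro c' hc'
      rw [hS2, Finset.mem_filter] at hc'
      exact hc'.1
  have htot : S1.card + S2.card ≤ (F j2).card := by
    rw [← Finset.card_union_of_disjoint hdisj]
    exact Finset.card_le_card hsub12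
  omega

end AK
end

section
/- For any multipartition λ of n and multicharge s = (s_0 ≤ ... ≤ s_{l-1}), the regularization λ^R dominates λ: λ^R ⊵ λ in the dominance order on l-multipartitions of n. -/
open scoped Classical

namespace AK

/-! Up to a constant that does not depend on `ν`, the dominance partial sum of `ν` at `(c, k)` is
the sum of the entries of the shifted symbol of `ν` over the first `c` rows (cut beyond the
support) and the first `k` positions of row `c`. Read column by column, and since the charges
increase, this region meets every column in an initial segment. The symbol of `λ^R` has the same
column multisets as that of `λ` and its columns decrease downwards, so on each such initial
segment it carries the largest entries of the column; summing over the columns gives `λ^R ⊵ λ`. -/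

open Finset

theorem sum_le_sum_of_map_eq_of_forall_le {ι β : Type*} [AddCommGroup β] [LinearOrder β]
    [IsOrderedAddMonoid β] {F S : Finset ι} {f g : ι → β} (hfg : F.val.map f = F.val.map g)
    (hSF : S ⊆ F) (hg : ∀ x ∈ S, ∀ y ∈ F, y ∉ S → g y ≤ g x) :
    ∑ x ∈ S, f x ≤ ∑ x ∈ S, g x := by
  rcases S.eq_empty_or_nonempty with rfl | hS
  · simp
  set t := S.inf' hS g
  have hgS : ∀ x ∈ S, t ≤ g x := fun x hx => S.inf'_le g hx
  have hgF : ∀ y ∈ F, y ∉ S → g y ≤ t := by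
    obtain ⟨x, hx, hxt⟩ := S.exists_mem_eq_inf' hS g
    intro y hy hyS
    rw [show t = g x from hxt]
    exact hg x hx y hy hyS
  -- the total excess over `t` depends only on the multiset of values; that of `g` lies in `S`
  have hexcess : ∀ φ : ι → β,
      ∑ x ∈ F, max (φ x - t) 0 = ((F.val.map φ).map fun u => max (u - t) 0).sum := by
    intro φ
    rw [Multiset.map_map]
    rfl
  calc ∑ x ∈ S, f x ≤ ∑ x ∈ S, (max (f x - t) 0 + t) :=
        sum_le_sum fun x _ => sub_le_iff_le_add.1 (le_max_left _ _)
    _ = ∑ x ∈ S, max (f x - t) 0 + #S • t := by rw [sum_add_distrib, sum_const]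
    _ ≤ ∑ x ∈ F, max (f x - t) 0 + #S • t := by
        gcongr
        exact fun _ _ _ => le_max_right _ _
    _ = ∑ x ∈ F, max (g x - t) 0 + #S • t := by rw [hexcess f, hexcess g, hfg]
    _ = ∑ x ∈ S, max (g x - t) 0 + #S • t := by
        rw [sum_subset hSF fun y hy hyS => max_eq_right (sub_nonpos.2 (hgF y hy hyS))]
    _ = ∑ x ∈ S, g x := by
        rw [← sum_const, ← sum_add_distrib]
        exact sum_congr rfl fun x hx => by
          rw [max_eq_left (sub_nonneg.2 (hgS x hx)), sub_add_cancel]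

theorem sum_range_eq_sum_filter_shift {M : Type*} [AddCommMonoid M] (f : ℕ → M) (n : ℕ) (a : ℤ)
    {J : Finset ℤ} (hJ : Icc (1 - a) (n - a) ⊆ J) :
    ∑ i ∈ range n, f (i + 1) = ∑ j ∈ J with 1 ≤ j + a ∧ j + a ≤ n, f (j + a).toNat := by
  refine sum_nbij' (fun i => (i + 1 : ℤ) - a) (fun j => (j + a).toNat - 1) ?_ ?_ ?_ ?_ ?_
  · intro i hi
    rw [mem_range] at hi
    exact mem_filter.2 ⟨hJ (mem_Icc.2 ⟨by omega, by omega⟩), by omega, by omega⟩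
  · intro j hj
    rw [mem_filter] at hj
    rw [mem_range]
    omega
  · intro i _
    omega
  · intro j hj
    rw [mem_filter] at hj
    omega
  · intro i _
    congr 1
    omega

theorem sum_rows_eq_sum_columns {M : Type*} [AddCommMonoid M] (R : Finset ℕ) (len : ℕ → ℕ)
    (a : ℕ → ℤ) {J : Finset ℤ} (hJ : ∀ c ∈ R, Icc (1 - a c) (len c - a c) ⊆ J)
    (f : ℕ → ℕ → M) :
    ∑ c ∈ R, ∑ i ∈ range (len c), f c (i + 1)
      = ∑ j ∈ J, ∑ c ∈ R with 1 ≤ j + a c ∧ j + a c ≤ len c, f c (j + a c).toNat := by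
  rw [sum_congr rfl fun c hc => sum_range_eq_sum_filter_shift (f c) (len c) (a c) (hJ c hc)]
  simp only [sum_filter]
  exact sum_comm

def columnEntry (s : ℕ → ℤ) (h : ℕ) (ν : ℕ → ℕ →₀ ℕ) (j : ℤ) (c : ℕ) : ℤ :=
  symbEntry s h ν c (j + s c).toNat

section Symbol

variable {l : ℕ} {s : ℕ → ℤ} {h : ℕ}

theorem Standard.columnEntry_le {ν : ℕ → ℕ →₀ ℕ} (hs : IsMulticharge l s)
    (hstd : Standard l s h ν) {j : ℤ} {c c' : ℕ} (hj : 1 ≤ j + s c) (hcc' : c ≤ c')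
    (hc' : c' < l) : columnEntry s h ν j c' ≤ columnEntry s h ν j c := by
  induction c', hcc' using Nat.le_induction with
  | base => exact le_rfl
  | succ n hcn ih =>
    have hsn := hs c n hcn (by omega)
    have hsn' := hs n (n + 1) (by omega) hc'
    have step := hstd n hc' (j + s n).toNat (by omega)
    rw [show (j + s n).toNat + (s (n + 1) - s n).toNat = (j + s (n + 1)).toNat by omega] at step
    exact step.trans (ih (by omega))

/-- When the right ends `len c' - s c'` of the rows, in column coordinates, decrease downwards,
the rows `≤ c` meet column `j` in an initial segment of it, where the standard symbol of `mu`
carries the largest entries of the column. -/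
theorem sum_columnEntry_le_of_standard {lam mu : ℕ → ℕ →₀ ℕ} (hs : IsMulticharge l s)
    (hstd : Standard l s h mu) {j : ℤ}
    (hcol : columnMultiset l s h mu j = columnMultiset l s h lam j) {c : ℕ} (hc : c < l)
    (len : ℕ → ℕ) (hlen : ∀ c₁ c₂, c₁ ≤ c₂ → c₂ ≤ c → (len c₂ : ℤ) - s c₂ ≤ len c₁ - s c₁) :
    ∑ c' ∈ range (c + 1) with 1 ≤ j + s c' ∧ j + s c' ≤ len c', columnEntry s h lam j c'
      ≤ ∑ c' ∈ range (c + 1) with 1 ≤ j + s c' ∧ j + s c' ≤ len c', columnEntry s h mu j c' := by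
  refine sum_le_sum_of_map_eq_of_forall_le (F := {c' ∈ range l | 1 ≤ j + s c'}) hcol.symm
    (fun c' hc' => ?_) (fun x hx y hy hyx => ?_)
  · simp only [mem_filter, mem_range] at hc' ⊢
    exact ⟨by omega, hc'.2.1⟩
  · simp only [mem_filter, mem_range] at hx hy hyx
    have hxy : x < y := by
      by_contra! hyx'
      have := hs y x hyx' (by omega)
      have := hlen y x hyx' (by omega)
      exact hyx ⟨by omega, hy.2, by omega⟩
    exact hstd.columnEntry_le hs hx.2.1 hxy.le hy.1

end Symbol

theorem dominance_sum_eq_sum_rows {ν : ℕ → ℕ →₀ ℕ} (hν : ∀ c, ν c 0 = 0) {c k : ℕ}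
    {len : ℕ → ℕ} (hk : len c = k) (hsupp : ∀ c' < c, (ν c').support ⊆ range (len c' + 1)) :
    (∑ i ∈ range c, (ν i).sum fun _ v => v) + ∑ j ∈ range k, ν c (j + 1)
      = ∑ c' ∈ range (c + 1), ∑ i ∈ range (len c'), ν c' (i + 1) := by
  rw [sum_range_succ, hk]
  congr 1
  refine sum_congr rfl fun c' hc' => ?_
  rw [Finsupp.sum_of_support_subset _ (hsupp c' (mem_range.1 hc')) _ fun _ _ => rfl,
    sum_range_succ', hν, add_zero]

theorem dominance_sum_eq_sum_columns (s : ℕ → ℤ) (h : ℕ) {ν : ℕ → ℕ →₀ ℕ}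
    (hν : ∀ c, ν c 0 = 0) {c k : ℕ} {len : ℕ → ℕ} (hk : len c = k)
    (hsupp : ∀ c' < c, (ν c').support ⊆ range (len c' + 1)) {J : Finset ℤ}
    (hJ : ∀ c' ∈ range (c + 1), Icc (1 - s c') (len c' - s c') ⊆ J) :
    (((∑ i ∈ range c, (ν i).sum fun _ v => v) + ∑ j ∈ range k, ν c (j + 1) : ℕ) : ℤ)
      = ∑ j ∈ J, ∑ c' ∈ range (c + 1) with 1 ≤ j + s c' ∧ j + s c' ≤ len c',
          columnEntry s h ν j c'
        - ∑ c' ∈ range (c + 1), ∑ i ∈ range (len c'), (s c' + h - (i + 1 : ℤ)) := by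
  unfold columnEntry
  rw [dominance_sum_eq_sum_rows hν hk hsupp, ← sum_rows_eq_sum_columns _ len s hJ,
    ← sum_sub_distrib]
  push_cast
  refine sum_congr rfl fun c' _ => ?_
  rw [← sum_sub_distrib]
  refine sum_congr rfl fun i _ => ?_
  rw [symbEntry]
  push_cast
  ring

/-- the regularization `λ^R` dominates `λ`. -/
theorem regularization_dominates (l : ℕ) (s : ℕ → ℤ) (hs : IsMulticharge l s)
    (lam mu : ℕ → ℕ →₀ ℕ) (hlam : IsMultipartition l lam)
    (hreg : IsRegularization l s lam mu) :
    Dominates l mu lam := by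
  obtain ⟨⟨hmu, -⟩, hstd, hcol⟩ := hreg
  intro c hc k
  obtain ⟨M, hM⟩ := ((range c).biUnion fun c' => (lam c').support ∪ (mu c').support).bddAbove
  -- the rows `< c` are cut beyond their supports, all at the same column `k + M - s 0`
  set len : ℕ → ℕ := fun c' => if c' = c then k else k + M + (s c' - s 0).toNat
  have hlen : ∀ c₁ c₂, c₁ ≤ c₂ → c₂ ≤ c → (len c₂ : ℤ) - s c₂ ≤ len c₁ - s c₁ := by
    intro c₁ c₂ h₁₂ h₂
    have := hs 0 c₁ c₁.zero_le (by omega)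
    have := hs c₁ c₂ h₁₂ (by omega)
    simp only [len]
    split_ifs <;> omega
  have hJ : ∀ c' ∈ range (c + 1),
      Icc (1 - s c') (len c' - s c') ⊆ Icc (1 - s c) (len 0 - s 0) := by
    intro c' hc'
    rw [mem_range] at hc'
    exact Icc_subset_Icc (by linarith [hs c' c (by omega) hc]) (hlen 0 c' c'.zero_le (by omega))
  have hsupp : ∀ ν ∈ [lam, mu], ∀ c' < c, (ν c').support ⊆ range (len c' + 1) := by
    intro ν hν c' hc' i hi
    have : i ≤ M := hM <| mem_coe.2 <| mem_biUnion.2 ⟨c', mem_range.2 hc', by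
      rcases List.mem_pair.1 hν with rfl | rfl <;> simp [hi]⟩
    simp only [len, mem_range]
    split_ifs <;> omega
  have hk : len c = k := if_pos rfl
  -- the size of the symbol only shifts all entries, so any size will do
  rw [← Nat.cast_le (α := ℤ), dominance_sum_eq_sum_columns s 0 (fun c' => (hlam.1 c').1) hk
    (hsupp lam (by simp)) hJ, dominance_sum_eq_sum_columns s 0 (fun c' => (hmu c').1) hk
    (hsupp mu (by simp)) hJ]
  refine sub_le_sub_right (sum_le_sum fun j _ => ?_) _
  exact sum_columnEntry_le_of_standard hs (hstd 0) (hcol 0 j) hc len hlen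

end AK
end

section
/- The statistic R(λ) = Σ_{c,j} R(λ)_{(j,c)}, where R(λ)_{(j,c)} counts the rows c' > c such that the symbol entry B^c_j satisfies B^c_j < B^{c'}_{j + s_{c'} - s_c} and B^c_j does not occur in row B^{c'}, is independent of the size parameter h used to form the shifted symbol (for any h exceeding the minimum admissible size). -/
open scoped Classical

namespace AK

lemma entry_succ (s : ℕ → ℤ) (h : ℕ) (lam : ℕ → ℕ →₀ ℕ) (c i : ℕ) :
    symbEntry s (h+1) lam c i = symbEntry s h lam c i + 1 := by
  unfold symbEntry; push_cast; ring

lemma part_zero {p : ℕ →₀ ℕ} (hp : IsPartitionF p) {m n : ℕ} (hm : 1 ≤ m)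
    (h0 : p m = 0) (hmn : m ≤ n) : p n = 0 :=
  Nat.le_zero.mp (h0 ▸ hp.2 m n hm hmn)

lemma adm_succ (l : ℕ) (s : ℕ → ℤ) (h : ℕ) (lam : ℕ → ℕ →₀ ℕ)
    (hlam : IsMultipartition l lam) (ha : Admissible l s h lam) :
    Admissible l s (h+1) lam := by
  intro c hc
  obtain ⟨h1, h2⟩ := ha c hc
  refine ⟨by push_cast; omega, ?_⟩
  exact part_zero (hlam.1 c) (by omega) h2 (by push_cast; omega)

lemma inRow_succ (l : ℕ) (s : ℕ → ℤ) (h : ℕ) (lam : ℕ → ℕ →₀ ℕ)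
    (hlam : IsMultipartition l lam) (ha : Admissible l s h lam)
    (c' : ℕ) (hc' : c' < l) (x : ℤ) (hx : 0 ≤ x) :
    InRow s (h+1) lam c' (x+1) ↔ InRow s h lam c' x := by
  obtain ⟨hb, hz⟩ := ha c' hc'
  constructor
  · rintro ⟨p, hp1, hp2, hpe⟩
    rw [entry_succ] at hpe
    have hpe' : symbEntry s h lam c' p = x := by omega
    refine ⟨p, hp1, ?_, hpe'⟩
    by_contra hlt
    push_neg at hlt
    have hpz : lam c' p = 0 := part_zero (hlam.1 c') (by omega) hz (by omega)
    unfold symbEntry at hpe'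
    rw [hpz] at hpe'
    omega
  · rintro ⟨p, hp1, hp2, hpe⟩
    refine ⟨p, hp1, by push_cast; omega, by rw [entry_succ, hpe]⟩

lemma rstatAt_succ (l : ℕ) (s : ℕ → ℤ) (h : ℕ) (lam : ℕ → ℕ →₀ ℕ)
    (hlam : IsMultipartition l lam) (ha : Admissible l s h lam) (c j : ℕ)
    (hc : c < l) (hj1 : 1 ≤ j) (hj2 : (j : ℤ) ≤ (h : ℤ) + s c) :
    RstatAt l s (h+1) lam c j = RstatAt l s h lam c j := by
  unfold RstatAt
  congr 1
  apply Finset.filter_congr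
  intro c' hmem
  simp only [Finset.mem_range] at hmem
  have hx : 0 ≤ symbEntry s h lam c j := by
    unfold symbEntry
    have : 0 ≤ ((lam c) j : ℤ) := Int.natCast_nonneg _
    omega
  have hIn := inRow_succ l s h lam hlam ha c' hmem _ hx
  rw [entry_succ, entry_succ]
  constructor
  · rintro ⟨a, b, d⟩; exact ⟨a, by omega, fun w => d (hIn.mpr w)⟩
  · rintro ⟨a, b, d⟩; exact ⟨a, by omega, fun w => d (hIn.mp w)⟩

lemma rstatAt_top (l : ℕ) (s : ℕ → ℤ) (h : ℕ) (lam : ℕ → ℕ →₀ ℕ)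
    (hlam : IsMultipartition l lam) (ha : Admissible l s h lam) (c : ℕ) (hc : c < l) :
    RstatAt l s (h+1) lam c (((h : ℤ) + s c).toNat + 1) = 0 := by
  unfold RstatAt
  rw [Finset.card_eq_zero, Finset.filter_eq_empty_iff]
  intro c' hmem
  simp only [Finset.mem_range] at hmem
  rintro ⟨hcc', hlt, hnin⟩
  apply hnin
  obtain ⟨hb, hz⟩ := ha c hc
  obtain ⟨hb', hz'⟩ := ha c' hmem
  have hj0 : lam c (((h : ℤ) + s c).toNat + 1) = 0 :=
    part_zero (hlam.1 c) (by omega) hz (by omega)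
  have hE : symbEntry s (h+1) lam c (((h : ℤ) + s c).toNat + 1) = 0 := by
    unfold symbEntry; rw [hj0]; push_cast; omega
  rw [hE]
  have hj0' : lam c' (((h : ℤ) + s c').toNat + 1) = 0 :=
    part_zero (hlam.1 c') (by omega) hz' (by omega)
  refine ⟨((h : ℤ) + s c').toNat + 1, by omega, by push_cast; omega, ?_⟩
  unfold symbEntry; rw [hj0']; push_cast; omega

lemma rstat_succ (l : ℕ) (s : ℕ → ℤ) (h : ℕ) (lam : ℕ → ℕ →₀ ℕ)
    (hlam : IsMultipartition l lam) (ha : Admissible l s h lam) :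
    Rstat l s (h+1) lam = Rstat l s h lam := by
  unfold Rstat
  apply Finset.sum_congr rfl
  intro c hc
  simp only [Finset.mem_range] at hc
  obtain ⟨hb, hz⟩ := ha c hc
  have ht : ((↑(h+1) : ℤ) + s c).toNat = ((h : ℤ) + s c).toNat + 1 := by push_cast; omega
  rw [ht, Finset.sum_Icc_succ_top (by omega)]
  rw [rstatAt_top l s h lam hlam ha c hc, add_zero]
  apply Finset.sum_congr rfl
  intro j hj
  simp only [Finset.mem_Icc] at hj
  exact rstatAt_succ l s h lam hlam ha c j hc hj.1 (by omega)

lemma adm_add (l : ℕ) (s : ℕ → ℤ) (h d : ℕ) (lam : ℕ → ℕ →₀ ℕ)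
    (hlam : IsMultipartition l lam) (ha : Admissible l s h lam) :
    Admissible l s (h+d) lam := by
  induction d with
  | zero => exact ha
  | succ d ih => exact adm_succ l s (h+d) lam hlam ih

lemma rstat_add (l : ℕ) (s : ℕ → ℤ) (h d : ℕ) (lam : ℕ → ℕ →₀ ℕ)
    (hlam : IsMultipartition l lam) (ha : Admissible l s h lam) :
    Rstat l s (h+d) lam = Rstat l s h lam := by
  induction d with
  | zero => rfl
  | succ d ih =>
    rw [show h + (d+1) = (h+d) + 1 from rfl,
      rstat_succ l s (h+d) lam hlam (adm_add l s h d lam hlam ha), ih]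

/-- the statistic `R(λ)` does not depend on the admissible size `h`. -/
theorem Rstat_independent_of_size (l : ℕ) (s : ℕ → ℤ) (hs : IsMulticharge l s)
    (lam : ℕ → ℕ →₀ ℕ) (hlam : IsMultipartition l lam) (h₁ h₂ : ℕ)
    (ha₁ : Admissible l s h₁ lam) (ha₂ : Admissible l s h₂ lam) :
    Rstat l s h₁ lam = Rstat l s h₂ lam := by
  rcases le_total h₁ h₂ with hle | hle
  · rw [show h₂ = h₁ + (h₂ - h₁) by omega, rstat_add l s h₁ (h₂ - h₁) lam hlam ha₁]
  · rw [show h₁ = h₂ + (h₁ - h₂) by omega, rstat_add l s h₂ (h₁ - h₂) lam hlam ha₂]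

end AK
end

section
/- A multipartition λ is cylindric (with respect to a weakly increasing multicharge s) if and only if R(λ) = 0. -/
open scoped Classical

namespace AK

/-- Entries of a row of the symbol are strictly decreasing. -/
lemma symbEntry_lt_of_lt {s : ℕ → ℤ} {h : ℕ} {lam : ℕ → ℕ →₀ ℕ} {c : ℕ}
    (hp : IsPartitionF (lam c)) {i i' : ℕ} (h1 : 1 ≤ i) (h2 : i < i') :
    symbEntry s h lam c i' < symbEntry s h lam c i := by
  have := hp.2 i i' h1 (le_of_lt h2)
  unfold symbEntry
  omega

/-- A nonzero part lies strictly inside the admissible range. -/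
lemma pos_lt_of_ne {s : ℕ → ℤ} {h : ℕ} {lam : ℕ → ℕ →₀ ℕ} {c : ℕ}
    (hp : IsPartitionF (lam c)) (hM1 : 1 ≤ (h : ℤ) + s c)
    (hM0 : lam c (((h : ℤ) + s c).toNat) = 0) {i : ℕ} (h1 : 1 ≤ i)
    (hne : lam c i ≠ 0) : i < ((h : ℤ) + s c).toNat := by
  by_contra hb
  push_neg at hb
  have := hp.2 (((h : ℤ) + s c).toNat) i (by omega) hb
  omega

/-- Adjacent rows of a cylindric multipartition satisfy the standardness inequality. -/
lemma step_std {l : ℕ} {s : ℕ → ℤ} {h : ℕ} {lam : ℕ → ℕ →₀ ℕ}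
    (hs : IsMulticharge l s) (hcyl : Cylindric l s lam) {c i : ℕ}
    (hl : c + 1 < l) (hi : 1 ≤ i) :
    symbEntry s h lam (c+1) (i + (s (c+1) - s c).toNat) ≤ symbEntry s h lam c i := by
  have hmono : s c ≤ s (c+1) := hs c (c+1) (by omega) hl
  have hcy := hcyl c hl i hi
  unfold symbEntry
  omega

/-- All pairs of rows of a cylindric multipartition satisfy the standardness inequality. -/
lemma chain_std {l : ℕ} {s : ℕ → ℤ} {h : ℕ} {lam : ℕ → ℕ →₀ ℕ}
    (hs : IsMulticharge l s) (hcyl : Cylindric l s lam) :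
    ∀ c' c : ℕ, c < c' → c' < l → ∀ i : ℕ, 1 ≤ i →
      symbEntry s h lam c' (i + (s c' - s c).toNat) ≤ symbEntry s h lam c i := by
  intro c'
  induction c' with
  | zero => intro c hc; omega
  | succ c'' ih =>
    intro c hc hl i hi
    rcases Nat.lt_succ_iff_lt_or_eq.mp hc with hlt | heq
    · have h1 : s c ≤ s c'' := hs c c'' (le_of_lt hlt) (by omega)
      have h2 : s c'' ≤ s (c''+1) := hs c'' (c''+1) (by omega) hl
      have hT : (s (c''+1) - s c).toNat
          = (s c'' - s c).toNat + (s (c''+1) - s c'').toNat := by omega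
      rw [hT, ← add_assoc]
      calc symbEntry s h lam (c''+1)
            (i + (s c'' - s c).toNat + (s (c''+1) - s c'').toNat)
          ≤ symbEntry s h lam c'' (i + (s c'' - s c).toNat) :=
            step_std hs hcyl hl (by omega)
        _ ≤ symbEntry s h lam c i := ih c hlt (by omega) i hi
    · subst heq
      exact step_std hs hcyl hl hi

/-- a multipartition is cylindric iff `R(λ) = 0`. -/
theorem cylindric_iff_Rstat_zero (l : ℕ) (s : ℕ → ℤ) (hs : IsMulticharge l s)
    (lam : ℕ → ℕ →₀ ℕ) (hlam : IsMultipartition l lam) (h : ℕ)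
    (ha : Admissible l s h lam) :
    Cylindric l s lam ↔ Rstat l s h lam = 0 := by
  constructor
  · -- Cylindric → Rstat = 0
    intro hcyl
    unfold Rstat
    apply Finset.sum_eq_zero
    intro c hc
    apply Finset.sum_eq_zero
    intro j hj
    unfold RstatAt
    rw [Finset.card_eq_zero, Finset.filter_eq_empty_iff]
    rintro c' hc' ⟨hcc', hlt, -⟩
    rw [Finset.mem_range] at hc'
    rw [Finset.mem_Icc] at hj
    exact absurd (chain_std hs hcyl c' c hcc' hc' j hj.1) (not_le.mpr hlt)
  · -- Rstat = 0 → Cylindric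
    intro hR
    by_contra hnc
    unfold Cylindric at hnc
    push_neg at hnc
    obtain ⟨c, hl, i, hi, hviol⟩ := hnc
    set t : ℕ := (s (c+1) - s c).toNat with ht
    have hmono : s c ≤ s (c+1) := hs c (c+1) (by omega) hl
    have hcl : c < l := by omega
    have hac := ha c hcl
    have hac1 := ha (c+1) hl
    set B : ℕ := ((h : ℤ) + s c).toNat with hB
    -- violating positions are bounded by B
    have hbound : ∀ m : ℕ, 1 ≤ m → lam c m < lam (c+1) (m + t) → m ≤ B := by
      intro m hm1 hm2
      have hne : lam (c+1) (m + t) ≠ 0 := by omega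
      have := pos_lt_of_ne (hlam.1 (c+1)) hac1.1 hac1.2 (by omega) hne
      omega
    set P : ℕ → Prop := fun m => 1 ≤ m ∧ lam c m < lam (c+1) (m + t) with hP
    have hPi : P i := ⟨hi, by omega⟩
    set i0 : ℕ := Nat.findGreatest P B with hi0
    have hPi0 : P i0 := Nat.findGreatest_spec (hbound i hPi.1 hPi.2) hPi
    have hmax : ∀ m : ℕ, P m → m ≤ i0 :=
      fun m hm => Nat.le_findGreatest (hbound m hm.1 hm.2) hm
    -- the strict symbol inequality at position i0
    have hsym : symbEntry s h lam c i0 < symbEntry s h lam (c+1) (i0 + t) := by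
      have := hPi0.2
      unfold symbEntry
      omega
    -- the value does not occur in row c+1
    have hnin : ¬ InRow s h lam (c+1) (symbEntry s h lam c i0) := by
      rintro ⟨p, hp1, hp2, hpe⟩
      rcases lt_trichotomy p (i0 + t) with hplt | hpeq | hpgt
      · have := symbEntry_lt_of_lt (s := s) (h := h) (hlam.1 (c+1)) hp1 hplt
        omega
      · rw [hpeq] at hpe; omega
      · -- p > i0 + t gives a larger violating position, contradiction
        set m : ℕ := p - t with hm
        have hmp : m + t = p := by omega
        have hm1 : 1 ≤ m := by omega
        have hi0m : i0 < m := by omega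
        have hlt2 : symbEntry s h lam c m < symbEntry s h lam (c+1) (m + t) := by
          rw [hmp, hpe]
          exact symbEntry_lt_of_lt (hlam.1 c) hPi0.1 hi0m
        have hPm : P m := by
          refine ⟨hm1, ?_⟩
          have : s c ≤ s (c+1) := hmono
          unfold symbEntry at hlt2
          omega
        have := hmax m hPm
        omega
    -- so RstatAt at (c, i0) is positive, contradicting Rstat = 0
    have hmem : (c+1) ∈ (Finset.range l).filter (fun c' => c < c' ∧
        symbEntry s h lam c i0 < symbEntry s h lam c' (i0 + (s c' - s c).toNat) ∧
        ¬ InRow s h lam c' (symbEntry s h lam c i0)) := by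
      rw [Finset.mem_filter, Finset.mem_range]
      exact ⟨hl, by omega, hsym, hnin⟩
    have hRA : RstatAt l s h lam c i0 ≠ 0 := by
      unfold RstatAt
      rw [Finset.card_ne_zero]
      exact ⟨c+1, hmem⟩
    have hzero : RstatAt l s h lam c i0 = 0 := by
      have h1 := (Finset.sum_eq_zero_iff.mp hR) c (Finset.mem_range.mpr hcl)
      have h2 := (Finset.sum_eq_zero_iff.mp h1) i0
      apply h2
      rw [Finset.mem_Icc]
      exact ⟨hPi0.1, hbound i0 hPi0.1 hPi0.2⟩
    exact hRA hzero

end AK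
end

section
/- Let λ be a nonempty cylindric multipartition with respect to s = (s_0 ≤ ... ≤ s_{l-1}). Define c(λ) as the minimal index with λ^{c(λ)} ≠ ∅, let i(λ) be minimal with B^{c(λ)}_{i(λ)} > B^{c(λ)}_{i(λ)+1} + 1 in the shifted symbol, set j(λ) = B^{c(λ)}_{i(λ)}, and let r(λ) ≥ 1 be maximal such that B^{c(λ)+k-1}_{i(λ)+s_{c(λ)+k-1}-s_{c(λ)}} = j(λ) for k = 1,...,r(λ). Then for every k = 1,...,r(λ), one has j(λ) > B^{c(λ)+k-1}_{i(λ)+s_{c(λ)+k-1}-s_{c(λ)}+1} + 1; consequently, replacing all these r(λ) occurrences of j(λ) by j(λ)-1 yields a well-defined symbol with strictly increasing rows. -/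
open scoped Classical

namespace AK

/-- in the reduction step of a nonempty cylindric multipartition, each of the
`r(λ)` rows satisfies `j(λ) > B^{c(λ)+k-1}_{i(λ)+s_{c(λ)+k-1}-s_{c(λ)}+1} + 1`; consequently,
decreasing the `r(λ)` occurrences of `j(λ)` to `j(λ)-1` yields a symbol with strictly
increasing rows. -/
theorem reduction_gap_inequality (l : ℕ) (s : ℕ → ℤ) (hs : IsMulticharge l s)
    (lam : ℕ → ℕ →₀ ℕ) (hlam : IsMultipartition l lam) (hcyl : Cylindric l s lam)
    (h : ℕ) (ha : Admissible l s h lam)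
    (c0 i0 r0 : ℕ) (hc0l : c0 < l)
    (hne : (lam c0) 1 ≠ 0) (hminc : ∀ c, c < c0 → (lam c) 1 = 0)
    (hi0 : 1 ≤ i0) (hgap : (lam c0) (i0+1) < (lam c0) i0)
    (hgapmin : ∀ i, 1 ≤ i → i < i0 → (lam c0) (i+1) = (lam c0) i)
    (hr0 : 1 ≤ r0) (hr0l : c0 + r0 ≤ l)
    (hreq : ∀ k, k < r0 → (lam (c0+k)) (i0 + (s (c0+k) - s c0).toNat) = (lam c0) i0)
    (hrmax : c0 + r0 = l ∨ (lam (c0+r0)) (i0 + (s (c0+r0) - s c0).toNat) ≠ (lam c0) i0)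
    (B' : ℕ → ℕ → ℤ)
    (hB' : ∀ c i, B' c i =
      if c0 ≤ c ∧ c < c0 + r0 ∧ i = i0 + (s c - s c0).toNat
      then symbEntry s h lam c i - 1 else symbEntry s h lam c i) :
    (∀ k, k < r0 →
      symbEntry s h lam (c0+k) (i0 + (s (c0+k) - s c0).toNat + 1) + 1
        < symbEntry s h lam c0 i0) ∧
    (∀ c, c < l → ∀ i : ℕ, 1 ≤ i → (i : ℤ) + 1 ≤ (h : ℤ) + s c → B' c (i+1) < B' c i) := by
  have hdec : ∀ c i, 1 ≤ i → symbEntry s h lam c (i+1) < symbEntry s h lam c i := by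
    intro c i hi
    have hp : lam c (i+1) ≤ lam c i := (hlam.1 c).2 i (i+1) hi (Nat.le_succ i)
    simp only [symbEntry]
    push_cast
    omega
  have hchain : ∀ k, c0 + k < l →
      lam (c0+k) (i0 + 1 + (s (c0+k) - s c0).toNat) ≤ lam c0 (i0+1) := by
    intro k
    induction k with
    | zero => intro _; simp
    | succ k ih =>
      intro hkl
      have hkl' : c0 + k < l := by omega
      have hle : s c0 ≤ s (c0+k) := hs c0 (c0+k) (Nat.le_add_right _ _) hkl'
      have hle2 : s (c0+k) ≤ s (c0+k+1) := hs (c0+k) (c0+k+1) (Nat.le_succ _) hkl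
      have hcy := hcyl (c0+k) (by omega) (i0 + 1 + (s (c0+k) - s c0).toNat) (by omega)
      have hidx : i0 + 1 + (s (c0+k) - s c0).toNat + (s (c0+k+1) - s (c0+k)).toNat
          = i0 + 1 + (s (c0+k+1) - s c0).toNat := by omega
      show lam (c0+k+1) (i0 + 1 + (s (c0+k+1) - s c0).toNat) ≤ lam c0 (i0+1)
      calc lam (c0+k+1) (i0 + 1 + (s (c0+k+1) - s c0).toNat)
          = lam (c0+k+1) (i0 + 1 + (s (c0+k) - s c0).toNat + (s (c0+k+1) - s (c0+k)).toNat) := by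
            rw [hidx]
        _ ≤ lam (c0+k) (i0 + 1 + (s (c0+k) - s c0).toNat) := hcy
        _ ≤ lam c0 (i0+1) := ih hkl'
  have hsymbEq : ∀ k, k < r0 →
      symbEntry s h lam (c0+k) (i0 + (s (c0+k) - s c0).toNat) = symbEntry s h lam c0 i0 := by
    intro k hk
    have hkl : c0 + k < l := by omega
    have hle : s c0 ≤ s (c0+k) := hs c0 (c0+k) (Nat.le_add_right _ _) hkl
    simp only [symbEntry, hreq k hk]
    push_cast
    omega
  have goal1 : ∀ k, k < r0 →
      symbEntry s h lam (c0+k) (i0 + (s (c0+k) - s c0).toNat + 1) + 1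
        < symbEntry s h lam c0 i0 := by
    intro k hk
    have hkl : c0 + k < l := by omega
    have h1 : lam (c0+k) (i0 + 1 + (s (c0+k) - s c0).toNat) ≤ lam c0 (i0+1) := hchain k hkl
    have hle : s c0 ≤ s (c0+k) := hs c0 (c0+k) (Nat.le_add_right _ _) hkl
    simp only [symbEntry]
    rw [show i0 + (s (c0+k) - s c0).toNat + 1 = i0 + 1 + (s (c0+k) - s c0).toNat by omega]
    push_cast
    omega
  refine ⟨goal1, ?_⟩
  intro c hcl i hi _
  rw [hB' c i, hB' c (i+1)]
  by_cases hmi : c0 ≤ c ∧ c < c0 + r0 ∧ i = i0 + (s c - s c0).toNat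
  · rw [if_pos hmi, if_neg (by rintro ⟨_, _, h3⟩; omega)]
    obtain ⟨ha1, ha2, ha3⟩ := hmi
    have hk : c - c0 < r0 := by omega
    have e1 := hsymbEq (c - c0) hk
    have e2 := goal1 (c - c0) hk
    rw [show c0 + (c - c0) = c by omega] at e1 e2
    subst ha3
    linarith
  · rw [if_neg hmi]
    by_cases hmi1 : c0 ≤ c ∧ c < c0 + r0 ∧ i + 1 = i0 + (s c - s c0).toNat
    · rw [if_pos hmi1]
      have := hdec c i hi
      linarith
    · rw [if_neg hmi1]
      exact hdec c i hi

end AK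
end

section
/- With notation as in the symbol-reduction step for a nonempty cylindric multipartition λ: the new symbol obtained by decreasing the r(λ) equal column entries j(λ) to j(λ)-1 is again standard, i.e. the resulting multipartition λ^- of rank |λ| - r(λ) is cylindric. -/
open scoped Classical

namespace AK

lemma tele_toNat (l : ℕ) (s : ℕ → ℤ) (hs : IsMulticharge l s) (c0 a b : ℕ)
    (h1 : c0 ≤ a) (h2 : a ≤ b) (hb : b < l) :
    (s b - s c0).toNat = (s a - s c0).toNat + (s b - s a).toNat := by
  have h3 : s c0 ≤ s a := hs c0 a h1 (lt_of_le_of_lt h2 hb)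
  have h4 : s a ≤ s b := hs a b h2 hb
  omega

lemma sum_pred {f g : ℕ →₀ ℕ} {p : ℕ} (hp : ∀ i, i ≠ p → g i = f i)
    (hfp : g p + 1 = f p) :
    (g.sum fun _ v => v) + 1 = (f.sum fun _ v => v) := by
  classical
  set S := f.support ∪ g.support with hS
  have hf : (f.sum fun _ v => v) = ∑ i ∈ S, f i :=
    Finsupp.sum_of_support_subset _ Finset.subset_union_left _ (fun _ _ => rfl)
  have hg : (g.sum fun _ v => v) = ∑ i ∈ S, g i :=
    Finsupp.sum_of_support_subset _ Finset.subset_union_right _ (fun _ _ => rfl)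
  have hpS : p ∈ S :=
    Finset.mem_union_left _ (Finsupp.mem_support_iff.2 (by omega))
  have heq : ∑ i ∈ S.erase p, g i = ∑ i ∈ S.erase p, f i :=
    Finset.sum_congr rfl (fun i hi => hp i (Finset.ne_of_mem_erase hi))
  rw [hf, hg, ← Finset.add_sum_erase _ f hpS, ← Finset.add_sum_erase _ g hpS, heq]
  omega

/-- the reduced multipartition `λ⁻` is a well-defined cylindric multipartition
of rank `|λ| - r(λ)`. -/
theorem reduction_is_cylindric (l : ℕ) (s : ℕ → ℤ) (hs : IsMulticharge l s)
    (lam : ℕ → ℕ →₀ ℕ) (hlam : IsMultipartition l lam) (hcyl : Cylindric l s lam)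
    (c0 i0 r0 : ℕ) (hc0l : c0 < l)
    (hne : (lam c0) 1 ≠ 0) (hminc : ∀ c, c < c0 → (lam c) 1 = 0)
    (hi0 : 1 ≤ i0) (hgap : (lam c0) (i0+1) < (lam c0) i0)
    (hgapmin : ∀ i, 1 ≤ i → i < i0 → (lam c0) (i+1) = (lam c0) i)
    (hr0 : 1 ≤ r0) (hr0l : c0 + r0 ≤ l)
    (hreq : ∀ k, k < r0 → (lam (c0+k)) (i0 + (s (c0+k) - s c0).toNat) = (lam c0) i0)
    (hrmax : c0 + r0 = l ∨ (lam (c0+r0)) (i0 + (s (c0+r0) - s c0).toNat) ≠ (lam c0) i0)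
    (mu : ℕ → ℕ →₀ ℕ)
    (hmu : ∀ c i, (mu c) i =
      if c0 ≤ c ∧ c < c0 + r0 ∧ i = i0 + (s c - s c0).toNat
      then (lam c) i - 1 else (lam c) i) :
    IsMultipartition l mu ∧ Cylindric l s mu ∧ rank l mu + r0 = rank l lam := by
  classical
  -- value at the modified positions
  have hPval : ∀ c, c0 ≤ c → c < c0 + r0 →
      (lam c) (i0 + (s c - s c0).toNat) = (lam c0) i0 := by
    intro c h1 h2
    have := hreq (c - c0) (by omega)
    rwa [show c0 + (c - c0) = c from by omega] at this
  have hJ : 1 ≤ (lam c0) i0 := by omega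
  -- entry just below the run position is strictly smaller
  have below : ∀ k, k < r0 →
      (lam (c0 + k)) (i0 + (s (c0 + k) - s c0).toNat + 1) < (lam c0) i0 := by
    intro k
    induction k with
    | zero =>
      intro _
      simpa using hgap
    | succ k ih =>
      intro hk
      have hIH := ih (by omega)
      have hll : c0 + k + 1 < l := by omega
      have hcy := hcyl (c0 + k) hll (i0 + (s (c0 + k) - s c0).toNat + 1) (by omega)
      have htel := tele_toNat l s hs c0 (c0 + k) (c0 + k + 1) (by omega) (by omega) hll
      have harg : i0 + (s (c0 + k) - s c0).toNat + 1 + (s (c0 + k + 1) - s (c0 + k)).toNat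
          = i0 + (s (c0 + k + 1) - s c0).toNat + 1 := by omega
      have : (lam (c0 + k + 1)) (i0 + (s (c0 + k + 1) - s c0).toNat + 1)
          ≤ (lam (c0 + k)) (i0 + (s (c0 + k) - s c0).toNat + 1) := by
        rw [← harg]; exact hcy
      exact lt_of_le_of_lt this hIH
  have hbel : ∀ c, c0 ≤ c → c < c0 + r0 →
      (lam c) (i0 + (s c - s c0).toNat + 1) < (lam c0) i0 := by
    intro c h1 h2
    have := below (c - c0) (by omega)
    rwa [show c0 + (c - c0) = c from by omega] at this
  have mu_le : ∀ c i, (mu c) i ≤ (lam c) i := by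
    intro c i; rw [hmu]; split <;> omega
  have hroweq : ∀ c, ¬(c0 ≤ c ∧ c < c0 + r0) → mu c = lam c := by
    intro c h
    ext i
    rw [hmu, if_neg (by tauto)]
  refine ⟨⟨?_, ?_⟩, ?_, ?_⟩
  · -- each `mu c` is a partition
    intro c
    constructor
    · rw [hmu, if_neg (by rintro ⟨-, -, h⟩; omega)]
      exact (hlam.1 c).1
    · intro i j hi hij
      by_cases hc : c0 ≤ c ∧ c < c0 + r0
      · obtain ⟨h1, h2⟩ := hc
        have hpl := hPval c h1 h2
        have hb := hbel c h1 h2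
        by_cases hip : i = i0 + (s c - s c0).toNat
        · by_cases hjp : j = i0 + (s c - s c0).toNat
          · subst hip; subst hjp; exact le_refl _
          · have hmj : (mu c) j = (lam c) j := by
              rw [hmu, if_neg (by tauto)]
            have hmi : (mu c) i = (lam c) (i0 + (s c - s c0).toNat) - 1 := by
              rw [hmu, if_pos ⟨h1, h2, hip⟩, hip]
            have hle : (lam c) j ≤ (lam c) (i0 + (s c - s c0).toNat + 1) :=
              (hlam.1 c).2 _ j (by omega) (by omega)
            omega
        · by_cases hjp : j = i0 + (s c - s c0).toNat
          · have hmi : (mu c) i = (lam c) i := by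
              rw [hmu, if_neg (by tauto)]
            have hmj : (mu c) j = (lam c) (i0 + (s c - s c0).toNat) - 1 := by
              rw [hmu, if_pos ⟨h1, h2, hjp⟩, hjp]
            have hle : (lam c) (i0 + (s c - s c0).toNat) ≤ (lam c) i :=
              (hlam.1 c).2 i _ hi (by omega)
            omega
          · rw [hmu, if_neg (by tauto), hmu, if_neg (by tauto)]
            exact (hlam.1 c).2 i j hi hij
      · rw [hroweq c hc]
        exact (hlam.1 c).2 i j hi hij
  · -- rows `≥ l` vanish
    intro c hcl
    rw [hroweq c (by omega)]
    exact hlam.2 c hcl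
  · -- cylindricity
    intro c hcl i hi
    by_cases hmod : c0 ≤ c ∧ c < c0 + r0 ∧ i = i0 + (s c - s c0).toNat
    · obtain ⟨h1, h2, h3⟩ := hmod
      have htel := tele_toNat l s hs c0 c (c + 1) h1 (by omega) hcl
      have harg : i + (s (c + 1) - s c).toNat = i0 + (s (c + 1) - s c0).toNat := by omega
      have hlc : (lam c) i = (lam c0) i0 := by rw [h3]; exact hPval c h1 h2
      have e1 : (mu c) i = (lam c0) i0 - 1 := by
        rw [hmu, if_pos ⟨h1, h2, h3⟩, hlc]
      by_cases hnext : c + 1 < c0 + r0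
      · have hlc1 := hPval (c + 1) (by omega) hnext
        have e2 : (mu (c + 1)) (i + (s (c + 1) - s c).toNat) = (lam c0) i0 - 1 := by
          rw [hmu, if_pos ⟨by omega, hnext, harg⟩, harg, hlc1]
        rw [e1, e2]
      · have hc1 : c + 1 = c0 + r0 := by omega
        have hne' : (lam (c0 + r0)) (i0 + (s (c0 + r0) - s c0).toNat) ≠ (lam c0) i0 :=
          hrmax.resolve_left (by omega)
        rw [← hc1] at hne'
        have hcy := hcyl c hcl i hi
        have e2 : (mu (c + 1)) (i + (s (c + 1) - s c).toNat)
            = (lam (c + 1)) (i + (s (c + 1) - s c).toNat) := by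
          rw [hmu, if_neg (by rintro ⟨-, h, -⟩; omega)]
        have e3 : (lam (c + 1)) (i + (s (c + 1) - s c).toNat) ≠ (lam c0) i0 := by
          rw [harg]; exact hne'
        omega
    · have h1 : (mu c) i = (lam c) i := by rw [hmu, if_neg hmod]
      calc (mu (c + 1)) (i + (s (c + 1) - s c).toNat)
          ≤ (lam (c + 1)) (i + (s (c + 1) - s c).toNat) := mu_le _ _
        _ ≤ (lam c) i := hcyl c hcl i hi
        _ = (mu c) i := h1.symm
  · -- rank
    have hrowsum : ∀ c, c0 ≤ c → c < c0 + r0 →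
        ((mu c).sum fun _ v => v) + 1 = ((lam c).sum fun _ v => v) := by
      intro c h1 h2
      apply sum_pred (p := i0 + (s c - s c0).toNat)
      · intro i hip
        rw [hmu, if_neg (by tauto)]
      · rw [hmu, if_pos ⟨h1, h2, rfl⟩]
        have := hPval c h1 h2
        omega
    have key : ∀ c ∈ Finset.range l,
        ((mu c).sum fun _ v => v) + (if c0 ≤ c ∧ c < c0 + r0 then 1 else 0)
          = ((lam c).sum fun _ v => v) := by
      intro c _
      split
      · next h => exact hrowsum c h.1 h.2
      · next h => rw [hroweq c h, Nat.add_zero]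
    have hsplit : rank l mu + ∑ c ∈ Finset.range l, (if c0 ≤ c ∧ c < c0 + r0 then 1 else 0)
        = rank l lam := by
      unfold rank
      rw [← Finset.sum_add_distrib]
      exact Finset.sum_congr rfl key
    have hcard : ∑ c ∈ Finset.range l, (if c0 ≤ c ∧ c < c0 + r0 then 1 else 0) = r0 := by
      rw [← Finset.sum_filter]
      rw [show (Finset.range l).filter (fun c => c0 ≤ c ∧ c < c0 + r0)
          = Finset.Ico c0 (c0 + r0) from by
        ext c
        simp only [Finset.mem_filter, Finset.mem_range, Finset.mem_Ico]
        omega]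
      simp
    rw [← hsplit, hcard]

end AK
end

section
/- Let λ and μ be l-multipartitions of n with μ cylindric, and suppose μ is obtained from μ^- by the reduction step (μ^- →^{j:k} μ, adding k boxes corresponding to replacing k column entries j+h-1 by j+h in rows c(μ),...,c(μ)+k-1). Let ν be a multipartition of n-k with ν →^{j:k} λ (in rows r_1,...,r_k) and μ^- ⊵ ν^R. Then μ ⊵ λ^R, with equality μ = λ^R only if μ^- = ν^R. -/
open scoped Classical

namespace AK

open Finset

/-!
A standard symbol is determined by its column multisets: in a column, the entry of the row of
rank `r` is `≥ x` iff at least `r` entries of the column are `≥ x`. The arrow `ν →^{j:k} λ`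
replaces, in each column, some entries `j+h-1` by `j+h`, so the counts of entries `≥ x` change
only at `x = j+h`. Hence `λ^R` arises from `ν^R` by adding nodes of content `j`, at most one per
component, and counting the entries `j+h` column by column shows there are exactly `k` of them,
just as `μ` arises from `μ⁻`. Since `μ⁻ ⊵ ν^R`, the components of `ν^R` before `c(μ)` are empty,
and cylindricity of `μ` forbids a node of content `j` in them. Dominance is then a count of the
added nodes in each partial sum; the one delicate case is a component where `λ^R` gains its node
in an earlier row than `μ`, and there equality of contents makes `μ⁻` strictly dominate `ν^R`.
If `μ = λ^R`, the same count forces the nodes into the same components and, by content, into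
the same rows.
-/

lemma IsPartitionF.eq_zero_of_apply_one_eq_zero {f : ℕ →₀ ℕ} (hf : IsPartitionF f)
    (h1 : f 1 = 0) : f = 0 := by
  ext i
  rcases Nat.eq_zero_or_pos i with rfl | hi
  · exact hf.1
  · exact Nat.eq_zero_of_le_zero (h1 ▸ hf.2 1 i le_rfl hi)

lemma IsPartitionF.eq_of_sub_eq {f : ℕ →₀ ℕ} (hf : IsPartitionF f) {i i' : ℕ} (hi : 1 ≤ i)
    (hi' : 1 ≤ i') (he : (f i : ℤ) - i = f i' - i') : i = i' := by
  rcases lt_trichotomy i i' with hlt | rfl | hlt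
  · have := hf.2 i i' hi hlt.le
    omega
  · rfl
  · have := hf.2 i' i hi' hlt.le
    omega

lemma le_and_eq_of_forall_le_iff {a b y : ℤ} {P Q : ℤ → Prop} (ha : ∀ x, x ≤ a ↔ P x)
    (hb : ∀ x, x ≤ b ↔ Q x) (hPQ : ∀ x, P x → Q x) (hQP : ∀ x, x ≠ y → Q x → P x) :
    a ≤ b ∧ (a < b → a + 1 = y ∧ b = y) := by
  have hab : a ≤ b := (hb a).mpr (hPQ a ((ha a).mp le_rfl))
  refine ⟨hab, fun hlt => ⟨?_, ?_⟩⟩ <;> by_contra hne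
  · have := (ha _).mpr (hQP (a + 1) hne ((hb _).mp hlt))
    omega
  · have := (ha _).mpr (hQP b hne ((hb b).mp le_rfl))
    omega

lemma countP_le_replicate (n : ℕ) (x y : ℤ) :
    (Multiset.replicate n y).countP (x ≤ ·) = if x ≤ y then n else 0 := by
  rw [← Multiset.coe_replicate, Multiset.coe_countP, List.countP_replicate]
  simp

lemma card_eq_of_card_filter_eq {ι M : Type*} [DecidableEq M] {B R : Finset ι} {f g : ι → M}
    (hfib : ∀ m, #(B.filter (g · = m)) = #(R.filter (f · = m))) : #B = #R := by
  rw [card_eq_sum_card_fiberwise (t := B.image g ∪ R.image f)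
      fun c hc => mem_union_left _ (mem_image_of_mem g hc),
    card_eq_sum_card_fiberwise (t := B.image g ∪ R.image f)
      fun c hc => mem_union_right _ (mem_image_of_mem f hc)]
  exact sum_congr rfl fun m _ => hfib m

lemma card_range_filter_mem_Ico (c c0 k : ℕ) :
    #((range c).filter (· ∈ Ico c0 (c0 + k))) = min (c - c0) k := by
  rw [show (range c).filter (· ∈ Ico c0 (c0 + k)) = Ico c0 (min c (c0 + k))
    by ext; simp only [mem_filter, mem_range, mem_Ico]; omega,
    Nat.card_Ico]
  omega

lemma card_range_filter_mem_le_sub {B : Finset ℕ} {c0 : ℕ} (hB : ∀ c ∈ B, c0 ≤ c) (c : ℕ) :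
    #((range c).filter (· ∈ B)) ≤ c - c0 :=
  (card_le_card fun c' hc' => by
    simp only [mem_filter, mem_range] at hc'
    exact mem_Ico.mpr ⟨hB c' hc'.2, hc'.1⟩).trans_eq (Nat.card_Ico c0 c)

lemma card_range_filter_mem_add_ite_le (B : Finset ℕ) (c : ℕ) :
    #((range c).filter (· ∈ B)) + (if c ∈ B then 1 else 0) ≤ #B := by
  have hsub : (range c).filter (· ∈ B) ⊆ B := fun c' hc' => (mem_filter.mp hc').2
  split_ifs with hc
  · refine card_lt_card ⟨hsub, fun h' => ?_⟩
    simpa using h' hc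
  · exact card_le_card hsub

section Column

variable {l : ℕ} {s : ℕ → ℤ}

lemma IsMulticharge.column_antitone {β : Type*} [Preorder β] (hs : IsMulticharge l s)
    {f : ℕ → ℕ → β}
    (hf : ∀ c, c + 1 < l → ∀ i, 1 ≤ i → f (c+1) (i + (s (c+1) - s c).toNat) ≤ f c i)
    {j' : ℤ} {c c' : ℕ} (hcc' : c ≤ c') (hc' : c' < l) (hcol : 1 ≤ j' + s c) :
    f c' (j' + s c').toNat ≤ f c (j' + s c).toNat := by
  induction c', hcc' using Nat.le_induction with
  | base => exact le_rfl
  | succ c' hcc' ih =>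
    have hsc := hs c c' hcc' (by omega)
    have hsc' := hs c' (c' + 1) (by omega) hc'
    have hstep := hf c' hc' (j' + s c').toNat (by omega)
    rw [show (j' + s c').toNat + (s (c'+1) - s c').toNat = (j' + s (c'+1)).toNat by omega]
      at hstep
    exact hstep.trans (ih (by omega))

lemma Cylindric.add_le_of_eq_zero {mu : ℕ → ℕ →₀ ℕ} (hs : IsMulticharge l s)
    (hcyl : Cylindric l s mu) {c c' i : ℕ} (hcc' : c ≤ c') (hc' : c' < l) (hzero : mu c = 0)
    (hi : 1 ≤ i) (hpos : 0 < mu c' i) : (i : ℤ) + s c ≤ s c' := by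
  by_contra! hlt
  have hcol := hs.column_antitone (f := fun c i => mu c i) hcyl (j' := i - s c') hcc' hc'
    (by omega)
  rw [show ((i : ℤ) - s c' + s c').toNat = i by omega, hzero] at hcol
  simp only [Finsupp.coe_zero, Pi.zero_apply, nonpos_iff_eq_zero] at hcol
  omega

def colRank (s : ℕ → ℤ) (j' : ℤ) (c : ℕ) : ℕ :=
  #((range (c + 1)).filter fun c' => 1 ≤ j' + s c')

lemma countP_columnMultiset (h : ℕ) (α : ℕ → ℕ →₀ ℕ) (j' x : ℤ) :
    (columnMultiset l s h α j').countP (x ≤ ·)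
      = #((range l).filter fun c =>
          1 ≤ j' + s c ∧ x ≤ symbEntry s h α c (j' + s c).toNat) := by
  rw [columnMultiset, Multiset.countP_map, ← filter_val, ← filter_filter]
  rfl

lemma Standard.le_symbEntry_iff {h : ℕ} {α : ℕ → ℕ →₀ ℕ} (hs : IsMulticharge l s)
    (hst : Standard l s h α) {c : ℕ} {j' : ℤ} (hc : c < l) (hcol : 1 ≤ j' + s c) (x : ℤ) :
    x ≤ symbEntry s h α c (j' + s c).toNat
      ↔ colRank s j' c ≤ (columnMultiset l s h α j').countP (x ≤ ·) := by
  have hmono {c c' : ℕ} (hcc' : c ≤ c') (hc' : c' < l) (hcol : 1 ≤ j' + s c) :=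
    hs.column_antitone (f := symbEntry s h α) hst hcc' hc' hcol
  rw [countP_columnMultiset, colRank]
  constructor
  · intro hx
    refine card_le_card fun c' hc' => ?_
    simp only [mem_filter, mem_range] at hc' ⊢
    exact ⟨by omega, hc'.2, hx.trans (hmono (by omega) hc hc'.2)⟩
  · intro hr
    by_contra! hx
    have hsub : (range l).filter (fun c' =>
          1 ≤ j' + s c' ∧ x ≤ symbEntry s h α c' (j' + s c').toNat)
        ⊆ ((range (c + 1)).filter fun c' => 1 ≤ j' + s c').erase c := by
      intro c' hc'
      simp only [mem_filter, mem_range, mem_erase] at hc' ⊢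
      have hc'c : c' < c := by
        by_contra! hle
        exact absurd (hc'.2.2.trans (hmono hle hc'.1 hcol)) (not_le.mpr hx)
      exact ⟨by omega, by omega, hc'.2.1⟩
    have hmem : c ∈ (range (c + 1)).filter fun c' => 1 ≤ j' + s c' := by
      simp [hcol]
    have := (card_le_card hsub).trans_eq (card_erase_of_mem hmem)
    have := card_pos.mpr ⟨c, hmem⟩
    omega

end Column

/-- `β` arises from `α` by adding to each component `c ∈ R` a node of content `j`
in row `p c`. -/
def AddsNodes (s : ℕ → ℤ) (j : ℤ) (R : Finset ℕ) (p : ℕ → ℕ) (α β : ℕ → ℕ →₀ ℕ) : Prop :=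
  (∀ c ∈ R, 1 ≤ p c ∧ (α c (p c) : ℤ) + 1 - p c + s c = j) ∧
  ∀ c i, 1 ≤ i → β c i = α c i + if c ∈ R ∧ i = p c then 1 else 0

section Nodes

variable {l : ℕ} {s : ℕ → ℤ} {j : ℤ} {R : Finset ℕ} {p : ℕ → ℕ} {α β : ℕ → ℕ →₀ ℕ}

lemma Arrow.exists_addsNodes {h : ℕ} (harr : Arrow l s h j R α β) :
    ∃ p, AddsNodes s j R p α β := by
  choose! p hp using harr.2.1
  refine ⟨p, fun c hc => ?_, fun c i hi => ?_⟩
  · obtain ⟨hp1, -, hα, -⟩ := hp c hc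
    unfold symbEntry at hα
    exact ⟨hp1, by omega⟩
  · by_cases hc : c ∈ R
    · obtain ⟨-, -, hα, hβ, hrest⟩ := hp c hc
      by_cases hip : i = p c
      · subst hip
        unfold symbEntry at hα hβ
        simp only [hc, and_self, ite_true]
        omega
      · have := hrest i hi hip
        unfold symbEntry at this
        simp only [hc, hip, and_false, ite_false]
        omega
    · have := harr.2.2 c hc i hi
      unfold symbEntry at this
      simp only [hc, false_and, ite_false]
      omega

lemma AddsNodes.apply_eq_add_one (hadd : AddsNodes s j R p α β) {c : ℕ} (hc : c ∈ R) :
    β c (p c) = α c (p c) + 1 := by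
  simpa [hc] using hadd.2 c (p c) (hadd.1 c hc).1

lemma AddsNodes.apply_eq_ite (hadd : AddsNodes s j R p α β) (hα : IsMultipartition l α)
    (hβ : IsMultipartition l β) (c : ℕ) :
    β c = if c ∈ R then α c + Finsupp.single (p c) 1 else α c := by
  ext i
  rcases Nat.eq_zero_or_pos i with rfl | hi
  · split_ifs with hc
    · have := (hadd.1 c hc).1
      simp only [(hα.1 c).1, (hβ.1 c).1, Finsupp.add_apply, Finsupp.single_apply,
        if_neg (by omega : p c ≠ 0), add_zero]
    · rw [(hα.1 c).1, (hβ.1 c).1]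
  · rw [hadd.2 c i hi]
    by_cases hc : c ∈ R <;> simp [Finsupp.single_apply, hc, eq_comm]

lemma AddsNodes.columnMultiset_add_replicate (hR : ∀ c ∈ R, c < l)
    (hadd : AddsNodes s j R p α β) (h : ℕ) (j' : ℤ) :
    columnMultiset l s h β j'
        + Multiset.replicate #(R.filter fun c => (p c : ℤ) - s c = j') (j + h - 1)
      = columnMultiset l s h α j'
        + Multiset.replicate #(R.filter fun c => (p c : ℤ) - s c = j') (j + h) := by
  set N := R.filter fun c => (p c : ℤ) - s c = j'
  set S := (range l).filter fun c => 1 ≤ j' + s c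
  have hNS : S.filter (· ∈ N) = N := by
    rw [filter_mem_eq_inter, inter_eq_right]
    intro c hc
    obtain ⟨hcR, hcol⟩ := mem_filter.mp hc
    have := (hadd.1 c hcR).1
    simp only [S, mem_filter, mem_range]
    exact ⟨hR c hcR, by omega⟩
  have hsplit (γ : ℕ → ℕ →₀ ℕ) : columnMultiset l s h γ j'
      = (S.filter (· ∈ N)).val.map (fun c => symbEntry s h γ c (j' + s c).toNat)
        + (S.filter (· ∉ N)).val.map (fun c => symbEntry s h γ c (j' + s c).toNat) := by
    change Multiset.map _ S.val = _
    rw [← Multiset.filter_add_not (· ∈ N) S.val, Multiset.map_add]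
    rfl
  have hnew : ∀ c ∈ N, (j' + s c).toNat = p c ∧ c ∈ R := by
    intro c hc
    obtain ⟨hcR, hcol⟩ := mem_filter.mp hc
    exact ⟨by have := (hadd.1 c hcR).1; omega, hcR⟩
  have hold : ∀ c ∈ S.filter (· ∉ N),
      symbEntry s h β c (j' + s c).toNat = symbEntry s h α c (j' + s c).toNat := by
    intro c hc
    simp only [S, N, mem_filter, not_and] at hc
    obtain ⟨⟨-, hcol⟩, hcN⟩ := hc
    have hβ := hadd.2 c _ (by omega : 1 ≤ (j' + s c).toNat)
    rw [if_neg fun h' => hcN h'.1 (by have := (hadd.1 c h'.1).1; omega)] at hβ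
    simp [symbEntry, hβ]
  have hconst (γ : ℕ → ℕ →₀ ℕ) (y : ℤ) (hγ : ∀ c ∈ N, symbEntry s h γ c (p c) = y) :
      (S.filter (· ∈ N)).val.map (fun c => symbEntry s h γ c (j' + s c).toNat)
        = Multiset.replicate #N y := by
    rw [hNS, Multiset.eq_replicate]
    refine ⟨by simp, fun y' hy' => ?_⟩
    obtain ⟨c, hc, rfl⟩ := Multiset.mem_map.mp hy'
    rw [(hnew c hc).1]
    exact hγ c hc
  rw [hsplit β, hsplit α, hconst β (j + h), hconst α (j + h - 1),
    Multiset.map_congr rfl hold]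
  · abel
  · intro c hc
    have := (hadd.1 c (hnew c hc).2).2
    simp only [symbEntry]
    omega
  · intro c hc
    have := (hadd.1 c (hnew c hc).2).2
    simp only [symbEntry, hadd.apply_eq_add_one (hnew c hc).2]
    push_cast
    omega

end Nodes

section Regularization

variable {l : ℕ} {s : ℕ → ℤ} {j : ℤ} {R : Finset ℕ} {p : ℕ → ℕ} {nu lam nuR lamR : ℕ → ℕ →₀ ℕ}

lemma AddsNodes.regularization_apply (hs : IsMulticharge l s) (hR : ∀ c ∈ R, c < l)
    (hadd : AddsNodes s j R p nu lam) (hnu : IsRegularization l s nu nuR)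
    (hlam : IsRegularization l s lam lamR) {c i : ℕ} (hc : c < l) (hi : 1 ≤ i) :
    nuR c i ≤ lamR c i ∧ (nuR c i < lamR c i →
      lamR c i = nuR c i + 1 ∧ (nuR c i : ℤ) + 1 - i + s c = j) := by
  set j' : ℤ := i - s c
  have hcol : 1 ≤ j' + s c := by omega
  have hi' : (j' + s c).toNat = i := by omega
  -- With symbol size `0`, the arrow turns some entries `j - 1` of column `j'` into `j`, so the
  -- number of entries `≥ x` in that column changes only at `x = j`.
  have hcount (x : ℤ) := congrArg (Multiset.countP (x ≤ ·))
    (hadd.columnMultiset_add_replicate hR 0 j')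
  simp only [Multiset.countP_add, countP_le_replicate, Nat.cast_zero, add_zero] at hcount
  have key := le_and_eq_of_forall_le_iff (a := symbEntry s 0 nuR c i)
    (b := symbEntry s 0 lamR c i) (y := j)
    (P := fun x => colRank s j' c ≤ (columnMultiset l s 0 nu j').countP (x ≤ ·))
    (Q := fun x => colRank s j' c ≤ (columnMultiset l s 0 lam j').countP (x ≤ ·))
    (fun x => by rw [← hi', (hnu.2.1 0).le_symbEntry_iff hs hc hcol, hnu.2.2 0 j'])
    (fun x => by rw [← hi', (hlam.2.1 0).le_symbEntry_iff hs hc hcol, hlam.2.2 0 j'])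
    (fun x hx => by have := hcount x; split_ifs at this <;> omega)
    (fun x hne hx => by have := hcount x; split_ifs at this <;> omega)
  simp only [symbEntry, Nat.cast_zero, add_zero] at key
  omega

theorem AddsNodes.exists_addsNodes_regularization (hs : IsMulticharge l s)
    (hR : ∀ c ∈ R, c < l) (hadd : AddsNodes s j R p nu lam)
    (hnu : IsRegularization l s nu nuR) (hlam : IsRegularization l s lam lamR) :
    ∃ B q, #B = #R ∧ AddsNodes s j B q nuR lamR := by
  have hcmp {c i : ℕ} (hc : c < l) (hi : 1 ≤ i) := hadd.regularization_apply hs hR hnu hlam hc hi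
  set B := (range l).filter fun c => lamR c ≠ nuR c
  have hBl : ∀ c ∈ B, c < l := fun c hc => mem_range.mp (mem_filter.mp hc).1
  have hgrow : ∀ c ∈ B, ∃ i, 1 ≤ i ∧ nuR c i < lamR c i := by
    intro c hc
    obtain ⟨i, hi⟩ := DFunLike.ne_iff.mp (mem_filter.mp hc).2
    have hi0 : i ≠ 0 := by
      rintro rfl
      exact hi (by rw [(hlam.1.1 c).1, (hnu.1.1 c).1])
    exact ⟨i, by omega, lt_of_le_of_ne (hcmp (hBl c hc) (by omega)).1 (Ne.symm hi)⟩
  choose! q hq using hgrow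
  have hadd' : AddsNodes s j B q nuR lamR := by
    refine ⟨fun c hc => ⟨(hq c hc).1, ((hcmp (hBl c hc) (hq c hc).1).2 (hq c hc).2).2⟩,
      fun c i hi => ?_⟩
    by_cases hc : c < l
    · obtain ⟨hle, hlt⟩ := hcmp hc hi
      by_cases hcB : c ∈ B
      · by_cases hiq : i = q c
        · subst hiq
          rw [if_pos ⟨hcB, rfl⟩]
          exact (hlt (hq c hcB).2).1
        · rw [if_neg fun h' => hiq h'.2, add_zero]
          refine le_antisymm (not_lt.mp fun hlt' => hiq ?_) hle
          refine (hnu.1.1 c).eq_of_sub_eq hi (hq c hcB).1 ?_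
          have := (hlt hlt').2
          have := ((hcmp hc (hq c hcB).1).2 (hq c hcB).2).2
          omega
      · rw [if_neg fun h' => hcB h'.1, add_zero]
        simp only [B, mem_filter, mem_range, not_and, not_not] at hcB
        rw [hcB hc]
    · rw [if_neg fun h' => hc (hBl c h'.1), hnu.1.2 c (by omega), hlam.1.2 c (by omega)]
      rfl
  refine ⟨B, q, card_eq_of_card_filter_eq (f := fun c => (p c : ℤ) - s c)
    (g := fun c => (q c : ℤ) - s c) fun j' => ?_, hadd'⟩
  -- Each arrow raises the number of entries `j` in column `j'` by the number of its nodes there.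
  have hcountB := congrArg (Multiset.count j) (hadd'.columnMultiset_add_replicate hBl 0 j')
  have hcountR := congrArg (Multiset.count j) (hadd.columnMultiset_add_replicate hR 0 j')
  rw [hnu.2.2, hlam.2.2] at hcountB
  simp only [Multiset.count_add, Multiset.count_replicate, Nat.cast_zero, add_zero,
    sub_eq_self, one_ne_zero, ite_false, ite_true] at hcountB hcountR
  omega

end Regularization

def domSum (α : ℕ → ℕ →₀ ℕ) (c m : ℕ) : ℕ :=
  (∑ i ∈ range c, (α i).sum fun _ v => v) + ∑ i ∈ range m, α c (i + 1)

section Dominance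

variable {l : ℕ} {s : ℕ → ℤ} {j : ℤ} {α β γ : ℕ → ℕ →₀ ℕ}

lemma dominates_iff_domSum : Dominates l α β ↔ ∀ c < l, ∀ m, domSum β c m ≤ domSum α c m :=
  Iff.rfl

lemma domSum_succ (α : ℕ → ℕ →₀ ℕ) (c m : ℕ) :
    domSum α c (m + 1) = domSum α c m + α c (m + 1) := by
  simp only [domSum, sum_range_succ, add_assoc]

lemma Dominates.apply_eq_zero (hdom : Dominates l α β) {c i : ℕ} (hc : c < l)
    (hzero : ∀ c' ≤ c, α c' = 0) (hi : 1 ≤ i) : β c i = 0 := by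
  have hα : domSum α c i = 0 := by
    rw [domSum, sum_eq_zero fun c' hc' => by rw [hzero c' (mem_range.mp hc').le]; rfl,
      hzero c le_rfl]
    simp
  have := dominates_iff_domSum.mp hdom c hc i
  obtain ⟨m, rfl⟩ := Nat.exists_eq_add_of_le' hi
  rw [domSum_succ] at this
  omega

lemma domSum_lt_of_sub_eq (hdom : Dominates l α γ) {c : ℕ} (hc : c < l)
    (hα : IsPartitionF (α c)) (hγ : IsPartitionF (γ c)) {p q m : ℕ} (hp : 1 ≤ p)
    (hpm : p ≤ m) (hmq : m < q) (he : (γ c p : ℤ) - p = α c q - q) :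
    domSum γ c m < domSum α c m := by
  obtain ⟨m, rfl⟩ := Nat.exists_eq_add_of_le' (hp.trans hpm)
  have hγm := hγ.2 p (m + 1) hp hpm
  have hαm := hα.2 (m + 1) q (by omega) hmq.le
  have := dominates_iff_domSum.mp hdom c hc m
  rw [domSum_succ, domSum_succ]
  omega

variable {R : Finset ℕ} {p : ℕ → ℕ}

lemma AddsNodes.domSum_eq (hadd : AddsNodes s j R p α β) (hα : IsMultipartition l α)
    (hβ : IsMultipartition l β) (c m : ℕ) :
    domSum β c m = domSum α c m + #((range c).filter (· ∈ R))
      + if c ∈ R ∧ p c ≤ m then 1 else 0 := by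
  have hrow (c' : ℕ) : (β c').degree = (α c').degree + if c' ∈ R then 1 else 0 := by
    rw [hadd.apply_eq_ite hα hβ c']
    split_ifs <;> simp
  have hpart : ∑ i ∈ range m, β c (i + 1)
      = ∑ i ∈ range m, α c (i + 1) + if c ∈ R ∧ p c ≤ m then 1 else 0 := by
    rw [sum_congr rfl fun i _ => hadd.2 c (i + 1) (by omega), sum_add_distrib]
    by_cases hc : c ∈ R
    · have := (hadd.1 c hc).1
      simp only [hc, true_and]
      rw [sum_congr rfl fun i _ => if_congr (show i + 1 = p c ↔ i = p c - 1 by omega)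
        rfl rfl, sum_ite_eq']
      simp only [mem_range, show p c - 1 < m ↔ p c ≤ m by omega]
    · simp [hc]
  simp only [domSum]
  change ∑ i ∈ _, (β i).degree + _ = ∑ i ∈ _, (α i).degree + _ + _ + _
  rw [sum_congr rfl fun c' _ => hrow c', sum_add_distrib, sum_boole, hpart,
    Nat.cast_id]
  omega

end Dominance

section Core

variable {l k c0 : ℕ} {s : ℕ → ℤ} {j : ℤ} {B : Finset ℕ} {p q : ℕ → ℕ}
  {muM mu nuR lamR : ℕ → ℕ →₀ ℕ}

theorem dominates_of_addsNodes (hdom : Dominates l muM nuR)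
    (hmuM : IsMultipartition l muM) (hmu : IsMultipartition l mu)
    (hnuR : IsMultipartition l nuR) (hlamR : IsMultipartition l lamR)
    (hA : AddsNodes s j (Ico c0 (c0 + k)) q muM mu) (hB : AddsNodes s j B p nuR lamR)
    (hBk : #B ≤ k) (hBc0 : ∀ c ∈ B, c0 ≤ c) : Dominates l mu lamR := by
  refine dominates_iff_domSum.mpr fun c hc m => ?_
  rw [hA.domSum_eq hmuM hmu, hB.domSum_eq hnuR hlamR]
  have hd := dominates_iff_domSum.mp hdom c hc m
  have hAc := card_range_filter_mem_Ico c c0 k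
  have hB1 := card_range_filter_mem_le_sub hBc0 c
  have hB2 := card_range_filter_mem_add_ite_le B c
  by_cases hpm : c ∈ B ∧ p c ≤ m
  · obtain ⟨hcB, hpm⟩ := hpm
    have := hBc0 c hcB
    rw [if_pos ⟨hcB, hpm⟩]
    rw [if_pos hcB] at hB2
    by_cases hqm : c < c0 + k ∧ q c ≤ m
    · rw [if_pos (mem_Ico.mpr ⟨this, hqm.1⟩ |> fun h => ⟨h, hqm.2⟩)]
      omega
    · by_cases hck : c < c0 + k
      · have hcA : c ∈ Ico c0 (c0 + k) := mem_Ico.mpr ⟨this, hck⟩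
        have hlt := domSum_lt_of_sub_eq (q := q c) hdom hc (hmuM.1 c) (hnuR.1 c) (hB.1 c hcB).1 hpm
          (by omega) (by have := (hA.1 c hcA).2; have := (hB.1 c hcB).2; omega)
        omega
      · omega
  · rw [if_neg hpm]
    omega

theorem eq_of_addsNodes_of_eq (hdom : Dominates l muM nuR)
    (hmuM : IsMultipartition l muM) (hmu : IsMultipartition l mu)
    (hnuR : IsMultipartition l nuR) (hlamR : IsMultipartition l lamR)
    (hA : AddsNodes s j (Ico c0 (c0 + k)) q muM mu) (hB : AddsNodes s j B p nuR lamR)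
    (hAl : ∀ c ∈ Ico c0 (c0 + k), c < l) (hBk : #B ≤ k) (hBc0 : ∀ c ∈ B, c0 ≤ c)
    (heq : mu = lamR) : muM = nuR := by
  have hAB : Ico c0 (c0 + k) ⊆ B := by
    intro c hcA
    by_contra hcB
    have hd := dominates_iff_domSum.mp hdom c (hAl c hcA) (q c)
    have hsum := congrArg (domSum · c (q c)) heq
    simp only [hA.domSum_eq hmuM hmu, hB.domSum_eq hnuR hlamR, card_range_filter_mem_Ico,
      if_pos (And.intro hcA le_rfl), if_neg fun h' : c ∈ B ∧ _ => hcB h'.1] at hsum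
    have := card_range_filter_mem_le_sub hBc0 c
    have := mem_Ico.mp hcA
    omega
  have hBA : B = Ico c0 (c0 + k) :=
    (eq_of_subset_of_card_le hAB (by simpa using hBk)).symm
  subst hBA
  funext c
  have hmuc := hA.apply_eq_ite hmuM hmu c
  have hlamc := hB.apply_eq_ite hnuR hlamR c
  rw [heq, hlamc] at hmuc
  split_ifs at hmuc with hc
  · have hpq : p c = q c := by
      have hmuq := hA.apply_eq_add_one hc
      have hlamp := hB.apply_eq_add_one hc
      rw [heq] at hmuq
      have := (hA.1 c hc).2
      have := (hB.1 c hc).2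
      exact (hlamR.1 c).eq_of_sub_eq (hB.1 c hc).1 (hA.1 c hc).1 (by omega)
    rw [hpq] at hmuc
    exact (add_right_cancel hmuc).symm
  · exact hmuc.symm

end Core

theorem dominance_lemma_general (l k : ℕ) (s : ℕ → ℤ) (hs : IsMulticharge l s) (h : ℕ) (j : ℤ)
    (lam mu muM nu nuR lamR : ℕ → ℕ →₀ ℕ)
    (hmpmu : IsMultipartition l mu)
    (hmpmuM : IsMultipartition l muM)
    (hk : 1 ≤ k)
    (hcyl : Cylindric l s mu)
    (c0 : ℕ) (hminc : ∀ c, c < c0 → (mu c) 1 = 0)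
    (harr : Arrow l s h j (Finset.Ico c0 (c0 + k)) muM mu)
    (rowsnu : Finset ℕ) (hcard : rowsnu.card = k)
    (harrnu : Arrow l s h j rowsnu nu lam)
    (hregnu : IsRegularization l s nu nuR)
    (hreglam : IsRegularization l s lam lamR)
    (hdom : Dominates l muM nuR) :
    Dominates l mu lamR ∧ (mu = lamR → muM = nuR) := by
  obtain ⟨q, hq⟩ := harr.exists_addsNodes
  obtain ⟨p, hp⟩ := harrnu.exists_addsNodes
  obtain ⟨B, pB, hBcard, hB⟩ := hp.exists_addsNodes_regularization hs harrnu.1 hregnu hreglam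
  have hBk : #B ≤ k := (hBcard.trans hcard).le
  have hc0 : c0 ∈ Ico c0 (c0 + k) := mem_Ico.mpr ⟨le_rfl, by omega⟩
  have hmu0 : ∀ c < c0, mu c = 0 := fun c hc =>
    (hmpmu.1 c).eq_zero_of_apply_one_eq_zero (hminc c hc)
  -- Component `c < c0` of `ν^R` is empty, so a node of content `j` added there has content
  -- at most `s c`; cylindricity puts the content-`j` node of component `c0` above `s c`.
  have hBc0 : ∀ c ∈ B, c0 ≤ c := by
    intro c hcB
    by_contra! hcc0
    have hmuM0 : ∀ c' ≤ c, muM c' = 0 := fun c' hc' => by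
      simpa [show c' ∉ Ico c0 (c0 + k) by simp; omega, hmu0 c' (by omega)]
        using (hq.apply_eq_ite hmpmuM hmpmu c').symm
    obtain ⟨hpB, hcontent⟩ := hB.1 c hcB
    have hnuR0 := hdom.apply_eq_zero (hcc0.trans (harr.1 c0 hc0)) hmuM0 hpB
    have hnode := hq.apply_eq_add_one hc0
    have hcyl0 := hcyl.add_le_of_eq_zero hs hcc0.le (harr.1 c0 hc0) (hmu0 c hcc0)
      (hq.1 c0 hc0).1 (by omega)
    have hcontent0 := (hq.1 c0 hc0).2
    omega
  exact ⟨dominates_of_addsNodes hdom hmpmuM hmpmu hregnu.1 hreglam.1 hq hB hBk hBc0,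
    eq_of_addsNodes_of_eq hdom hmpmuM hmpmu hregnu.1 hreglam.1 hq hB harr.1 hBk hBc0⟩

/-- the dominance lemma (analogue of Fayers' Lemma 2.3): if `μ` is cylindric,
obtained from `μ⁻` by adding `k` boxes in rows `c(μ),…,c(μ)+k-1`, and `ν →^{j:k} λ` with
`μ⁻ ⊵ ν^R`, then `μ ⊵ λ^R`, with equality `μ = λ^R` only if `μ⁻ = ν^R`. -/
theorem dominance_lemma (l n k : ℕ) (s : ℕ → ℤ) (hs : IsMulticharge l s) (h : ℕ) (j : ℤ)
    (lam mu muM nu nuR lamR : ℕ → ℕ →₀ ℕ)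
    (hmplam : IsMultipartition l lam) (hmpmu : IsMultipartition l mu)
    (hmpmuM : IsMultipartition l muM) (hmpnu : IsMultipartition l nu)
    (hrlam : rank l lam = n) (hrmu : rank l mu = n)
    (hrnu : rank l nu = n - k) (hrmuM : rank l muM = n - k)
    (hk : 1 ≤ k) (hkn : k ≤ n)
    (hcyl : Cylindric l s mu)
    (c0 : ℕ) (hne : (mu c0) 1 ≠ 0) (hminc : ∀ c, c < c0 → (mu c) 1 = 0)
    (harr : Arrow l s h j (Finset.Ico c0 (c0 + k)) muM mu)
    (rowsnu : Finset ℕ) (hcard : rowsnu.card = k)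
    (harrnu : Arrow l s h j rowsnu nu lam)
    (hregnu : IsRegularization l s nu nuR)
    (hreglam : IsRegularization l s lam lamR)
    (hdom : Dominates l muM nuR) :
    Dominates l mu lamR ∧ (mu = lamR → muM = nuR) :=
  dominance_lemma_general l k s hs h j lam mu muM nu nuR lamR hmpmu hmpmuM hk hcyl c0 hminc harr
    rowsnu hcard harrnu hregnu hreglam hdom

end AK
end
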